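/- arXiv:1201.1242 — 8 statements merged into one kernel-verified Lean document; each statement's English description precedes it below -/
import Mathlib

section
/- The functions ũ and ṽ are continuous and strictly increasing on [a, b₀]. -/
/-!
Since `λ ≥ 0` vanishes exactly on `[-1, 1]`, the derivatives `u'` and `v'` vanish on `[-1, 1]` and
are positive outside it. Hence `u` and `v` are constant on `[-1, 1]` and strictly increasing on
`(-∞, -1]` and on `[1, ∞)`; cutting out the flat piece `[-1, 1]` and gluing the two branches at `0`
gives the continuous strictly increasing functions `ũ` and `ṽ`, even on all of `ℝ`.
-/

open intervalIntegral Set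

/-- `F` with the interval `[-1, 1]` of its argument cut out; `ũ = excise u` and `ṽ = excise v`. -/
noncomputable def excise (F : ℝ → ℝ) (y : ℝ) : ℝ :=
  if y ≤ 0 then F (y - 1) else F (y + 1)

section Excise

variable {F : ℝ → ℝ}

theorem eq_excise {G : ℝ → ℝ} (hneg : ∀ y < 0, G y = F (y - 1))
    (hpos : ∀ y, 0 < y → G y = F (y + 1)) (hzero : G 0 = F (-1)) : G = excise F := by
  funext y
  rcases lt_trichotomy y 0 with hy | rfl | hy
  · rw [excise, if_pos hy.le, hneg y hy]
  · rw [excise, if_pos le_rfl, hzero, zero_sub]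
  · rw [excise, if_neg hy.not_ge, hpos y hy]

theorem Continuous.excise (hF : Continuous F) (hF1 : F (-1) = F 1) : Continuous (excise F) :=
  Continuous.if_le (hF.comp (continuous_sub_right 1)) (hF.comp (continuous_add_const 1))
    continuous_id continuous_const fun y hy => by simp [hy, hF1]

theorem strictMono_excise (hl : StrictMonoOn F (Iic (-1))) (hr : StrictMonoOn F (Ici 1))
    (hF1 : F (-1) = F 1) : StrictMono (excise F) := by
  intro y₁ y₂ h
  simp only [excise]
  split_ifs with h₁ h₂ h₂
  · exact hl (by simp; linarith) (by simp; linarith) (by linarith)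
  · calc F (y₁ - 1) ≤ F (-1) := hl.monotoneOn (by simp; linarith) self_mem_Iic (by linarith)
      _ = F 1 := hF1
      _ < F (y₂ + 1) := hr self_mem_Ici (by simp; linarith) (by linarith)
  · linarith
  · exact hr (by simp; linarith) (by simp; linarith) (by linarith)

end Excise

section FlatOnUnitInterval

variable {F f : ℝ → ℝ}

theorem eq_apply_neg_one_of_hasDerivAt_eq_zero (hF : ∀ x, HasDerivAt F (f x) x)
    (hf0 : ∀ x ∈ Icc (-1 : ℝ) 1, f x = 0) :
    ∀ x ∈ Icc (-1 : ℝ) 1, F x = F (-1) :=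
  constant_of_has_deriv_right_zero (fun x _ => (hF x).continuousAt.continuousWithinAt)
    fun x hx => hf0 x (Ico_subset_Icc_self hx) ▸ (hF x).hasDerivWithinAt

theorem strictMonoOn_Ici_one_of_hasDerivAt_pos (hF : ∀ x, HasDerivAt F (f x) x)
    (hfpos : ∀ x ∉ Icc (-1 : ℝ) 1, 0 < f x) :
    StrictMonoOn F (Ici 1) := by
  refine strictMonoOn_of_hasDerivWithinAt_pos (convex_Ici 1)
    (fun x _ => (hF x).continuousAt.continuousWithinAt) (fun x _ => (hF x).hasDerivWithinAt)
    fun x hx => hfpos x fun h => ?_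
  rw [interior_Ici] at hx
  exact hx.not_ge h.2

theorem strictMonoOn_Iic_neg_one_of_hasDerivAt_pos (hF : ∀ x, HasDerivAt F (f x) x)
    (hfpos : ∀ x ∉ Icc (-1 : ℝ) 1, 0 < f x) :
    StrictMonoOn F (Iic (-1)) := by
  refine strictMonoOn_of_hasDerivWithinAt_pos (convex_Iic (-1))
    (fun x _ => (hF x).continuousAt.continuousWithinAt) (fun x _ => (hF x).hasDerivWithinAt)
    fun x hx => hfpos x fun h => ?_
  rw [interior_Iic] at hx
  exact hx.not_ge h.1

theorem continuous_and_strictMono_of_eq_excise {G : ℝ → ℝ} (hF : ∀ x, HasDerivAt F (f x) x)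
    (hf0 : ∀ x ∈ Icc (-1 : ℝ) 1, f x = 0) (hfpos : ∀ x ∉ Icc (-1 : ℝ) 1, 0 < f x)
    (hF0 : F 0 = 0) (hneg : ∀ y < 0, G y = F (y - 1)) (hpos : ∀ y, 0 < y → G y = F (y + 1))
    (hG0 : G 0 = 0) : Continuous G ∧ StrictMono G := by
  have hflat := eq_apply_neg_one_of_hasDerivAt_eq_zero hF hf0
  have hF1 : F (-1) = F 1 := (hflat 1 (by norm_num)).symm
  have hG : G = excise F :=
    eq_excise hneg hpos (by rw [hG0, ← hF0, hflat 0 (by norm_num)])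
  subst hG
  exact ⟨(continuous_iff_continuousAt.2 fun x => (hF x).continuousAt).excise hF1,
    strictMono_excise (strictMonoOn_Iic_neg_one_of_hasDerivAt_pos hF hfpos)
      (strictMonoOn_Ici_one_of_hasDerivAt_pos hF hfpos) hF1⟩

end FlatOnUnitInterval

theorem util_vtil_continuous_strictMono_general
    (lam bet : ℝ → ℝ)
    (hlam_smooth : ContDiff ℝ 1 lam)
    (hlam_zero : ∀ q ∈ Set.Icc (-1 : ℝ) 1, lam q = 0)
    (hlam_pos : ∀ q : ℝ, q ∉ Set.Icc (-1 : ℝ) 1 → 0 < lam q)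
    (hbet_smooth : ContDiff ℝ 1 bet)
    (u v : ℝ → ℝ)
    (hu : ∀ q : ℝ, u q =
      ∫ x in (0:ℝ)..q, lam x * Real.exp (-2 * ∫ y in (0:ℝ)..x, bet y * lam y))
    (hv : ∀ q : ℝ, v q =
      2 * ∫ x in (0:ℝ)..q, lam x * Real.exp (2 * ∫ y in (0:ℝ)..x, bet y * lam y))
    (a b0 : ℝ)
    (util vtil : ℝ → ℝ)
    (hutil_neg : ∀ y : ℝ, y < 0 → util y = u (y - 1))
    (hutil_pos : ∀ y : ℝ, 0 < y → util y = u (y + 1))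
    (hutil_zero : util 0 = 0)
    (hvtil_neg : ∀ y : ℝ, y < 0 → vtil y = v (y - 1))
    (hvtil_pos : ∀ y : ℝ, 0 < y → vtil y = v (y + 1))
    (hvtil_zero : vtil 0 = 0) :
    ContinuousOn util (Set.Icc a b0) ∧ StrictMonoOn util (Set.Icc a b0) ∧
    ContinuousOn vtil (Set.Icc a b0) ∧ StrictMonoOn vtil (Set.Icc a b0) := by
  set g : ℝ → ℝ → ℝ := fun c x => lam x * Real.exp (c * ∫ y in (0:ℝ)..x, bet y * lam y)
  have hlam := hlam_smooth.continuous
  have hg : ∀ c, Continuous (g c) := fun c =>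
    hlam.mul (Real.continuous_exp.comp (continuous_const.mul
      (continuous_primitive (fun p q => (hbet_smooth.continuous.mul hlam).intervalIntegrable p q) 0)))
  have hg0 : ∀ c, ∀ x ∈ Icc (-1 : ℝ) 1, g c x = 0 := fun c x hx => by simp [g, hlam_zero x hx]
  have hgpos : ∀ c, ∀ x ∉ Icc (-1 : ℝ) 1, 0 < g c x := fun c x hx =>
    mul_pos (hlam_pos x hx) (Real.exp_pos _)
  have hu' : ∀ q, HasDerivAt u (g (-2) q) q := fun q => by
    rw [funext hu]; exact ((hg _).integral_hasStrictDerivAt 0 q).hasDerivAt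
  have hv' : ∀ q, HasDerivAt v (2 * g 2 q) q := fun q => by
    rw [funext hv]; exact ((hg _).integral_hasStrictDerivAt 0 q).hasDerivAt.const_mul 2
  obtain ⟨hu_cont, hu_mono⟩ := continuous_and_strictMono_of_eq_excise hu' (hg0 _) (hgpos _)
    (by simp [hu]) hutil_neg hutil_pos hutil_zero
  obtain ⟨hv_cont, hv_mono⟩ := continuous_and_strictMono_of_eq_excise hv'
    (fun x hx => by simp [hg0 2 x hx]) (fun x hx => by simpa using hgpos 2 x hx)
    (by simp [hv]) hvtil_neg hvtil_pos hvtil_zero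
  exact ⟨hu_cont.continuousOn, hu_mono.strictMonoOn _, hv_cont.continuousOn, hv_mono.strictMonoOn _⟩

/-- The functions ũ and ṽ are continuous and strictly increasing on [a, b₀]. -/
theorem util_vtil_continuous_strictMono
    (lam bet : ℝ → ℝ)
    (hlam_smooth : ContDiff ℝ 1 lam)
    (hlam_bdd : ∃ M : ℝ, ∀ q : ℝ, |lam q| ≤ M)
    (hlam_zero : ∀ q ∈ Set.Icc (-1 : ℝ) 1, lam q = 0)
    (hlam_pos : ∀ q : ℝ, q ∉ Set.Icc (-1 : ℝ) 1 → 0 < lam q)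
    (hbet_smooth : ContDiff ℝ 1 bet)
    (hbet_bdd : ∃ M : ℝ, ∀ q : ℝ, |bet q| ≤ M)
    (u v : ℝ → ℝ)
    (hu : ∀ q : ℝ, u q =
      ∫ x in (0:ℝ)..q, lam x * Real.exp (-2 * ∫ y in (0:ℝ)..x, bet y * lam y))
    (hv : ∀ q : ℝ, v q =
      2 * ∫ x in (0:ℝ)..q, lam x * Real.exp (2 * ∫ y in (0:ℝ)..x, bet y * lam y))
    (a b0 : ℝ) (ha : a < 0) (hb : 0 < b0)
    (util vtil : ℝ → ℝ)
    (hutil_neg : ∀ y : ℝ, y < 0 → util y = u (y - 1))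
    (hutil_pos : ∀ y : ℝ, 0 < y → util y = u (y + 1))
    (hutil_zero : util 0 = 0)
    (hvtil_neg : ∀ y : ℝ, y < 0 → vtil y = v (y - 1))
    (hvtil_pos : ∀ y : ℝ, 0 < y → vtil y = v (y + 1))
    (hvtil_zero : vtil 0 = 0) :
    ContinuousOn util (Set.Icc a b0) ∧ StrictMonoOn util (Set.Icc a b0) ∧
    ContinuousOn vtil (Set.Icc a b0) ∧ StrictMonoOn vtil (Set.Icc a b0) :=
  util_vtil_continuous_strictMono_general lam bet hlam_smooth hlam_zero hlam_pos hbet_smooth u v hu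
    hv a b0 util vtil hutil_neg hutil_pos hutil_zero hvtil_neg hvtil_pos hvtil_zero
end

section
/- There exists a constant C > 0 such that for all ε ∈ (0,1), all δ, δ′ with 0 < δ′ < δ ≤ 1, and all q ∈ [−1−δ′, 1+δ′]: | (u^ε(q) − u^ε(−1−δ))/(u^ε(1+δ) − u^ε(−1−δ)) − (ũ(0) − ũ(−δ))/(ũ(δ) − ũ(−δ)) | ≤ (ũ(δ′) − ũ(−δ′) + C·ε)/(ũ(δ) − ũ(−δ)). -/
open intervalIntegral

/-!
Put `a = u(-1-δ) ≤ 0 ≤ b = u(1+δ)`: `u` is nondecreasing with `u(0) = 0`, and `a < b` because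
`λ > 0` on `(1, 1+δ)`. Since `u^ε(q) = u(q) + εq`, the left ratio is `(u(q) - a + εs)/(b - a + εt)`
with `0 ≤ s = q+1+δ ≤ t = 2(1+δ) ≤ 4`, the right one is `(0 - a)/(b - a)`, and their difference is
controlled by `|u(q)| ≤ u(1+δ') - u(-1-δ') = ũ(δ') - ũ(-δ')` and `εt ≤ 4ε`; so `C = 4`.
-/

lemma abs_perturbed_ratio_sub_ratio_le {a b c v s t U ε : ℝ} (hac : a ≤ c) (hcb : c ≤ b)
    (hab : a < b) (hvc : |v - c| ≤ U) (hs : 0 ≤ s) (hst : s ≤ t) (hε : 0 ≤ ε) :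
    |(v - a + ε * s) / (b - a + ε * t) - (c - a) / (b - a)| ≤ (U + ε * t) / (b - a) := by
  have hA : 0 < b - a := sub_pos.2 hab
  have hAD : b - a ≤ b - a + ε * t := le_add_of_nonneg_right (mul_nonneg hε (hs.trans hst))
  have hD : 0 < b - a + ε * t := hA.trans_le hAD
  have hU : 0 ≤ U + ε * t := add_nonneg ((abs_nonneg _).trans hvc) (mul_nonneg hε (hs.trans hst))
  have hdrift : |s * (b - a) - t * (c - a)| ≤ t * (b - a) :=
    abs_le.2 ⟨by nlinarith, by nlinarith⟩
  have hnum : |(v - c) * (b - a) + ε * (s * (b - a) - t * (c - a))| ≤ (U + ε * t) * (b - a) :=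
    calc _ ≤ |v - c| * (b - a) + ε * |s * (b - a) - t * (c - a)| := by
          grw [abs_add_le, abs_mul, abs_mul, abs_of_pos hA, abs_of_nonneg hε]
      _ ≤ U * (b - a) + ε * (t * (b - a)) := by gcongr
      _ = (U + ε * t) * (b - a) := by ring
  calc _ = |(v - c) * (b - a) + ε * (s * (b - a) - t * (c - a))| / ((b - a + ε * t) * (b - a)) := by
        rw [div_sub_div _ _ hD.ne' hA.ne', abs_div, abs_of_pos (mul_pos hD hA)]
        congr 2; ring
    _ ≤ (U + ε * t) * (b - a) / ((b - a + ε * t) * (b - a)) := by gcongr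
    _ = (U + ε * t) / (b - a + ε * t) := mul_div_mul_right _ _ hA.ne'
    _ ≤ (U + ε * t) / (b - a) := div_le_div_of_nonneg_left hU hA hAD

lemma Monotone.abs_sub_le_of_mem_Icc {α : Type*} [Preorder α] {u : α → ℝ} (hu : Monotone u)
    {lo hi x y : α} (hx : x ∈ Set.Icc lo hi) (hy : y ∈ Set.Icc lo hi) :
    |u x - u y| ≤ u hi - u lo :=
  abs_sub_le_iff.2 ⟨by linarith [hu hx.2, hu hy.1], by linarith [hu hy.2, hu hx.1]⟩

lemma monotone_integral_of_nonneg {f : ℝ → ℝ} (hf : Continuous f) (hf0 : ∀ x, 0 ≤ f x) (a : ℝ) :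
    Monotone fun q ↦ ∫ x in a..q, f x := fun x y hxy ↦ by
  rw [← sub_nonneg, integral_interval_sub_left (hf.intervalIntegrable _ _)
    (hf.intervalIntegrable _ _)]
  exact integral_nonneg hxy fun t _ ↦ hf0 t

lemma integral_lt_integral_of_pos_on_Ioo {f : ℝ → ℝ} (hf : Continuous f) {a x y : ℝ} (hxy : x < y)
    (hpos : ∀ t ∈ Set.Ioo x y, 0 < f t) : ∫ t in a..x, f t < ∫ t in a..y, f t := by
  rw [← sub_pos, integral_interval_sub_left (hf.intervalIntegrable _ _)
    (hf.intervalIntegrable _ _)]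
  exact intervalIntegral_pos_of_pos_on (hf.intervalIntegrable _ _) hpos hxy

lemma integral_add_const_eq {f : ℝ → ℝ} (hf : Continuous f) (a q ε : ℝ) :
    ∫ x in a..q, (f x + ε) = (∫ x in a..q, f x) + ε * (q - a) := by
  rw [integral_add (hf.intervalIntegrable _ _) intervalIntegrable_const, integral_const,
    smul_eq_mul, mul_comm]

theorem exit_probability_estimate_general
    (lam : ℝ → ℝ)
    (hlam_smooth : ContDiff ℝ 1 lam)
    (hlam_zero : ∀ q ∈ Set.Icc (-1 : ℝ) 1, lam q = 0)
    (hlam_pos : ∀ q : ℝ, q ∉ Set.Icc (-1 : ℝ) 1 → 0 < lam q)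
    (u : ℝ → ℝ) (hu : ∀ q : ℝ, u q = ∫ x in (0:ℝ)..q, lam x)
    (uE : ℝ → ℝ → ℝ) (huE : ∀ ε q : ℝ, uE ε q = ∫ x in (0:ℝ)..q, (lam x + ε))
    (util : ℝ → ℝ)
    (hutil_neg : ∀ y : ℝ, y < 0 → util y = u (y - 1))
    (hutil_pos : ∀ y : ℝ, 0 < y → util y = u (y + 1))
    (hutil_zero : util 0 = 0) :
    ∃ C > (0:ℝ), ∀ ε ∈ Set.Ioo (0:ℝ) 1, ∀ δ δ' : ℝ, 0 < δ' → δ' < δ → δ ≤ 1 →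
      ∀ q ∈ Set.Icc (-1 - δ') (1 + δ'),
        |(uE ε q - uE ε (-1 - δ)) / (uE ε (1 + δ) - uE ε (-1 - δ)) -
            (util 0 - util (-δ)) / (util δ - util (-δ))| ≤
          (util δ' - util (-δ') + C * ε) / (util δ - util (-δ)) := by
  have hcont : Continuous lam := hlam_smooth.continuous
  have hnonneg (x : ℝ) : 0 ≤ lam x := by
    by_cases hx : x ∈ Set.Icc (-1 : ℝ) 1
    exacts [(hlam_zero x hx).ge, (hlam_pos x hx).le]
  have hu' : u = fun q ↦ ∫ x in (0:ℝ)..q, lam x := funext hu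
  have hmono : Monotone u := hu' ▸ monotone_integral_of_nonneg hcont hnonneg 0
  have hu0 : u 0 = 0 := by simp [hu]
  have huE' (ε q : ℝ) : uE ε q = u q + ε * q := by
    rw [huE, integral_add_const_eq hcont, hu, sub_zero]
  have hutil_right (y : ℝ) (hy : 0 < y) : util y = u (1 + y) := by rw [hutil_pos y hy, add_comm]
  have hutil_left (y : ℝ) (hy : 0 < y) : util (-y) = u (-1 - y) := by
    rw [hutil_neg (-y) (neg_neg_of_pos hy)]; ring_nf
  refine ⟨4, by norm_num, ?_⟩
  rintro ε ⟨hε, -⟩ δ δ' hδ' hδ'δ hδ1 q ⟨hq₁, hq₂⟩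
  have hδ : 0 < δ := hδ'.trans hδ'δ
  have hgap : u (-1 - δ) < u (1 + δ) :=
    (hmono (by linarith : -1 - δ ≤ 1)).trans_lt <| hu' ▸
      integral_lt_integral_of_pos_on_Ioo hcont (by linarith) fun t ht ↦
        hlam_pos t fun h ↦ by linarith [ht.1, h.2]
  have hq : |u q - 0| ≤ u (1 + δ') - u (-1 - δ') :=
    hu0 ▸ hmono.abs_sub_le_of_mem_Icc ⟨hq₁, hq₂⟩ ⟨by linarith, by linarith⟩
  rw [hutil_zero, hutil_right δ hδ, hutil_left δ hδ, hutil_right δ' hδ', hutil_left δ' hδ',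
    huE', huE', huE']
  calc _ ≤ (u (1 + δ') - u (-1 - δ') + ε * (2 * (1 + δ))) / (u (1 + δ) - u (-1 - δ)) := by
        convert abs_perturbed_ratio_sub_ratio_le (hu0 ▸ hmono (by linarith)) (hu0 ▸ hmono
          (by linarith)) hgap hq (by linarith : 0 ≤ q + 1 + δ)
          (by linarith : q + 1 + δ ≤ 2 * (1 + δ)) hε.le using 2; ring
    _ ≤ _ := div_le_div_of_nonneg_right (by nlinarith) (by linarith)

/-- uniform estimate (Lemma 2.7 of the paper, model case with zero drift)
on the exit probability through the right endpoint of [−1−δ, 1+δ]. -/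
theorem exit_probability_estimate
    (lam : ℝ → ℝ)
    (hlam_smooth : ContDiff ℝ 1 lam)
    (hlam_bdd : ∃ M : ℝ, ∀ q : ℝ, |lam q| ≤ M)
    (hlam_zero : ∀ q ∈ Set.Icc (-1 : ℝ) 1, lam q = 0)
    (hlam_pos : ∀ q : ℝ, q ∉ Set.Icc (-1 : ℝ) 1 → 0 < lam q)
    (u : ℝ → ℝ) (hu : ∀ q : ℝ, u q = ∫ x in (0:ℝ)..q, lam x)
    (uE : ℝ → ℝ → ℝ) (huE : ∀ ε q : ℝ, uE ε q = ∫ x in (0:ℝ)..q, (lam x + ε))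
    (util : ℝ → ℝ)
    (hutil_neg : ∀ y : ℝ, y < 0 → util y = u (y - 1))
    (hutil_pos : ∀ y : ℝ, 0 < y → util y = u (y + 1))
    (hutil_zero : util 0 = 0) :
    ∃ C > (0:ℝ), ∀ ε ∈ Set.Ioo (0:ℝ) 1, ∀ δ δ' : ℝ, 0 < δ' → δ' < δ → δ ≤ 1 →
      ∀ q ∈ Set.Icc (-1 - δ') (1 + δ'),
        |(uE ε q - uE ε (-1 - δ)) / (uE ε (1 + δ) - uE ε (-1 - δ)) -
            (util 0 - util (-δ)) / (util δ - util (-δ))| ≤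
          (util δ' - util (-δ') + C * ε) / (util δ - util (-δ)) :=
  exit_probability_estimate_general lam hlam_smooth hlam_zero hlam_pos u hu uE huE util hutil_neg
    hutil_pos hutil_zero
end

section
/- Define g̃(y) = (1/W)·[ ξ₂(y)·∫₀^y ξ₁(z)·G(z)·2λ̃(z) dz + ξ₁(y)·∫_y^{b₀} ξ₂(z)·G(z)·2λ̃(z) dz ] for y ∈ (0, b₀]. Then g̃ is twice differentiable on (0, b₀) and satisfies (μ + n²/λ̃(y)²)·g̃(y) − D_ṽD_ũ g̃(y) = G(y) for all y ∈ (0, b₀). -/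
open Filter Topology intervalIntegral

/-!
Differentiating `g̃ = W⁻¹ (ξ₂ A + ξ₁ B)`, with `A' = ξ₁ G ṽ'` and `B' = -ξ₂ G ṽ'`, the terms
coming from `A'` and `B'` cancel, so `D_ũ g̃ = W⁻¹ (D_ũξ₂ A + D_ũξ₁ B)`. Differentiating once more,
the ODE for `ξᵢ` reproduces `(μ + n²/λ̃²) g̃`, and the terms from `A'` and `B'` now combine to
`-G ṽ'` times the Wronskian over `W`. The only analytic input is that `A` is differentiable on
`(0, b₀)`: its integrand is continuous on `(0, b₀]` and tends to `0` at `0`, because `ξ₁` and `λ̃` do.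
-/

open Set MeasureTheory

section Integrals

variable {E : Type*} [NormedAddCommGroup E] {f : ℝ → E} {a b y : ℝ}

theorem ContinuousOn.intervalIntegrable_of_tendsto_nhdsGT {L : E} (hab : a ≤ b)
    (hf : ContinuousOn f (Ioc a b)) (ha : Tendsto f (𝓝[>] a) (𝓝 L)) :
    IntervalIntegrable f volume a b := by
  classical
  have hext : ContinuousOn (Function.update f a L) (Icc a b) := by
    rw [continuousOn_update_iff, Icc_sdiff_left]
    exact ⟨hf, fun _ => ha.mono_left (nhdsWithin_mono _ Ioc_subset_Ioi_self)⟩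
  refine (hext.intervalIntegrable_of_Icc hab).congr_uIoo fun z hz => ?_
  rw [uIoo_of_le hab] at hz
  exact Function.update_of_ne hz.1.ne' _ _

variable [NormedSpace ℝ E] [CompleteSpace E]

theorem hasDerivAt_integral_right_of_continuousOn_Ioc (hf : ContinuousOn f (Ioc a b))
    (hint : IntervalIntegrable f volume a b) (hy : y ∈ Ioo a b) :
    HasDerivAt (fun x => ∫ z in a..x, f z) (f y) y :=
  integral_hasDerivAt_right
    (hint.mono_set (uIcc_subset_uIcc_left (mem_uIcc_of_le hy.1.le hy.2.le)))
    ((hf.mono Ioo_subset_Ioc_self).stronglyMeasurableAtFilter isOpen_Ioo y hy)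
    (hf.continuousAt (Ioc_mem_nhds hy.1 hy.2))

theorem hasDerivAt_integral_left_of_continuousOn_Ioc (hf : ContinuousOn f (Ioc a b))
    (hy : y ∈ Ioo a b) :
    HasDerivAt (fun x => ∫ z in x..b, f z) (-f y) y :=
  integral_hasDerivAt_left
    ((hf.mono fun _ hz => ⟨hy.1.trans_le hz.1, hz.2⟩).intervalIntegrable_of_Icc hy.2.le)
    ((hf.mono Ioo_subset_Ioc_self).stronglyMeasurableAtFilter isOpen_Ioo y hy)
    (hf.continuousAt (Ioc_mem_nhds hy.1 hy.2))

end Integrals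

section VariationOfConstants

variable {ξ₁ ξ₂ Dξ₁ Dξ₂ A B : ℝ → ℝ} {y l k r W : ℝ}

theorem hasDerivAt_variationOfConstants
    (h₁ : HasDerivAt ξ₁ (l * Dξ₁ y) y) (h₂ : HasDerivAt ξ₂ (l * Dξ₂ y) y)
    (hA : HasDerivAt A (ξ₁ y * r) y) (hB : HasDerivAt B (-(ξ₂ y * r)) y) :
    HasDerivAt (fun x => W⁻¹ * (ξ₂ x * A x + ξ₁ x * B x))
      (l * (W⁻¹ * (Dξ₂ y * A y + Dξ₁ y * B y))) y :=
  (((h₂.mul hA).add (h₁.mul hB)).const_mul W⁻¹).congr_deriv (by ring)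

theorem hasDerivAt_variationOfConstants_deriv
    (h₁ : HasDerivAt Dξ₁ (k * ξ₁ y) y) (h₂ : HasDerivAt Dξ₂ (k * ξ₂ y) y)
    (hA : HasDerivAt A (ξ₁ y * r) y) (hB : HasDerivAt B (-(ξ₂ y * r)) y)
    (hW : Dξ₁ y * ξ₂ y - Dξ₂ y * ξ₁ y = W) (hW₀ : W ≠ 0) :
    HasDerivAt (fun x => W⁻¹ * (Dξ₂ x * A x + Dξ₁ x * B x))
      (k * (W⁻¹ * (ξ₂ y * A y + ξ₁ y * B y)) - r) y := by
  refine (((h₂.mul hA).add (h₁.mul hB)).const_mul W⁻¹).congr_deriv ?_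
  subst hW
  field_simp
  ring

end VariationOfConstants

theorem variation_of_constants_solves_ode_general
    (b0 μ : ℝ) (hb0 : 0 < b0) (n : ℤ)
    (lamt : ℝ → ℝ)
    (hlamt_cont : ContinuousOn lamt (Set.Ioc 0 b0))
    (hlamt_lim : Tendsto lamt (𝓝[>] (0:ℝ)) (𝓝 0))
    (G : ℝ → ℝ) (hG : ContinuousOn G (Set.Icc 0 b0))
    (ξ₁ ξ₂ Dξ₁ Dξ₂ : ℝ → ℝ)
    (hξ₁d : ∀ y ∈ Set.Ioc (0:ℝ) b0,
      HasDerivWithinAt ξ₁ (lamt y * Dξ₁ y) (Set.Ioc 0 b0) y)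
    (hDξ₁d : ∀ y ∈ Set.Ioc (0:ℝ) b0,
      HasDerivWithinAt Dξ₁ (2 * lamt y * ((μ + (n:ℝ)^2 / (lamt y)^2) * ξ₁ y))
        (Set.Ioc 0 b0) y)
    (hξ₂d : ∀ y ∈ Set.Ioc (0:ℝ) b0,
      HasDerivWithinAt ξ₂ (lamt y * Dξ₂ y) (Set.Ioc 0 b0) y)
    (hDξ₂d : ∀ y ∈ Set.Ioc (0:ℝ) b0,
      HasDerivWithinAt Dξ₂ (2 * lamt y * ((μ + (n:ℝ)^2 / (lamt y)^2) * ξ₂ y))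
        (Set.Ioc 0 b0) y)
    (hξ₁lim : Tendsto ξ₁ (𝓝[>] (0:ℝ)) (𝓝 0))
    (W : ℝ) (hW : 0 < W)
    (hWr : ∀ y ∈ Set.Ioc (0:ℝ) b0, Dξ₁ y * ξ₂ y - Dξ₂ y * ξ₁ y = W)
    (gt : ℝ → ℝ)
    (hgt : ∀ y : ℝ, gt y = (1 / W) *
      (ξ₂ y * (∫ z in (0:ℝ)..y, ξ₁ z * G z * (2 * lamt z)) +
       ξ₁ y * (∫ z in y..b0, ξ₂ z * G z * (2 * lamt z)))) :
    ∃ Dgt : ℝ → ℝ,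
      (∀ y ∈ Set.Ioo (0:ℝ) b0, HasDerivAt gt (lamt y * Dgt y) y) ∧
      (∀ y ∈ Set.Ioo (0:ℝ) b0,
        HasDerivAt Dgt
          (2 * lamt y * ((μ + (n:ℝ)^2 / (lamt y)^2) * gt y - G y)) y) := by
  have hweighted : ∀ ξ : ℝ → ℝ, ContinuousOn ξ (Ioc 0 b0) →
      ContinuousOn (fun z => ξ z * G z * (2 * lamt z)) (Ioc 0 b0) := fun ξ hξ =>
    (hξ.mul (hG.mono Ioc_subset_Icc_self)).mul (continuousOn_const.mul hlamt_cont)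
  have hf := hweighted ξ₁ (HasDerivWithinAt.continuousOn hξ₁d)
  have hg := hweighted ξ₂ (HasDerivWithinAt.continuousOn hξ₂d)
  have hG₀ : Tendsto G (𝓝[>] 0) (𝓝 (G 0)) := by
    simpa only [ContinuousWithinAt, nhdsWithin_Ioo_eq_nhdsGT hb0] using
      (hG 0 ⟨le_rfl, hb0.le⟩).mono Ioo_subset_Icc_self
  have hf_int : IntervalIntegrable (fun z => ξ₁ z * G z * (2 * lamt z)) volume 0 b0 :=
    hf.intervalIntegrable_of_tendsto_nhdsGT hb0.le
      ((hξ₁lim.mul hG₀).mul (hlamt_lim.const_mul 2))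
  have hgt_eq : gt = fun x => W⁻¹ * (ξ₂ x * (∫ z in (0:ℝ)..x, ξ₁ z * G z * (2 * lamt z)) +
      ξ₁ x * (∫ z in x..b0, ξ₂ z * G z * (2 * lamt z))) := by
    funext x
    rw [hgt, one_div]
  subst hgt_eq
  refine ⟨fun x => W⁻¹ * (Dξ₂ x * (∫ z in (0:ℝ)..x, ξ₁ z * G z * (2 * lamt z)) +
      Dξ₁ x * (∫ z in x..b0, ξ₂ z * G z * (2 * lamt z))), fun y hy => ?_, fun y hy => ?_⟩
  all_goals
    have hy' : y ∈ Ioc 0 b0 := Ioo_subset_Ioc_self hy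
    have hnhds : Ioc 0 b0 ∈ 𝓝 y := Ioc_mem_nhds hy.1 hy.2
    have hA := (hasDerivAt_integral_right_of_continuousOn_Ioc hf hf_int hy).congr_deriv
      (mul_assoc _ _ _)
    have hB := (hasDerivAt_integral_left_of_continuousOn_Ioc hg hy).congr_deriv
      (congrArg Neg.neg (mul_assoc _ _ _))
  · exact hasDerivAt_variationOfConstants ((hξ₁d y hy').hasDerivAt hnhds)
      ((hξ₂d y hy').hasDerivAt hnhds) hA hB
  · have hD₁ := ((hDξ₁d y hy').hasDerivAt hnhds).congr_deriv (mul_assoc _ _ _).symm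
    have hD₂ := ((hDξ₂d y hy').hasDerivAt hnhds).congr_deriv (mul_assoc _ _ _).symm
    exact (hasDerivAt_variationOfConstants_deriv hD₁ hD₂ hA hB (hWr y hy') hW.ne').congr_deriv
      (by ring)

/-- the function g̃ built from the two solutions ξ₁, ξ₂ by the
variation-of-constants formula is twice differentiable on (0, b₀) (in the generalized
sense: g̃′ = λ̃·D_ũg̃ and D_ũg̃ is differentiable) and satisfies
(μ + n²/λ̃²)·g̃ − D_ṽD_ũg̃ = G there. -/
theorem variation_of_constants_solves_ode
    (b0 μ : ℝ) (hb0 : 0 < b0) (hμ : 0 < μ) (n : ℤ) (hn : n ≠ 0)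
    (lamt : ℝ → ℝ)
    (hlamt_cont : ContinuousOn lamt (Set.Ioc 0 b0))
    (hlamt_pos : ∀ y ∈ Set.Ioc (0:ℝ) b0, 0 < lamt y)
    (hlamt_lim : Tendsto lamt (𝓝[>] (0:ℝ)) (𝓝 0))
    (G : ℝ → ℝ) (hG : ContinuousOn G (Set.Icc 0 b0))
    (ξ₁ ξ₂ Dξ₁ Dξ₂ : ℝ → ℝ)
    (hξ₁nn : ∀ y ∈ Set.Ioc (0:ℝ) b0, 0 ≤ ξ₁ y)
    (hξ₂nn : ∀ y ∈ Set.Ioc (0:ℝ) b0, 0 ≤ ξ₂ y)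
    (hξ₁d : ∀ y ∈ Set.Ioc (0:ℝ) b0,
      HasDerivWithinAt ξ₁ (lamt y * Dξ₁ y) (Set.Ioc 0 b0) y)
    (hDξ₁d : ∀ y ∈ Set.Ioc (0:ℝ) b0,
      HasDerivWithinAt Dξ₁ (2 * lamt y * ((μ + (n:ℝ)^2 / (lamt y)^2) * ξ₁ y))
        (Set.Ioc 0 b0) y)
    (hξ₂d : ∀ y ∈ Set.Ioc (0:ℝ) b0,
      HasDerivWithinAt ξ₂ (lamt y * Dξ₂ y) (Set.Ioc 0 b0) y)
    (hDξ₂d : ∀ y ∈ Set.Ioc (0:ℝ) b0,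
      HasDerivWithinAt Dξ₂ (2 * lamt y * ((μ + (n:ℝ)^2 / (lamt y)^2) * ξ₂ y))
        (Set.Ioc 0 b0) y)
    (hξ₁mono : MonotoneOn ξ₁ (Set.Ioc 0 b0))
    (hξ₁lim : Tendsto ξ₁ (𝓝[>] (0:ℝ)) (𝓝 0))
    (hξ₂anti : AntitoneOn ξ₂ (Set.Ioc 0 b0))
    (hξ₂b0 : ξ₂ b0 = 0)
    (hDξ₁mono : MonotoneOn Dξ₁ (Set.Ioc 0 b0))
    (hDξ₂mono : MonotoneOn Dξ₂ (Set.Ioc 0 b0))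
    (hDξ₁lim : Tendsto Dξ₁ (𝓝[>] (0:ℝ)) (𝓝 0))
    (hDξ₂b0 : Dξ₂ b0 < 0)
    (W : ℝ) (hW : 0 < W)
    (hWr : ∀ y ∈ Set.Ioc (0:ℝ) b0, Dξ₁ y * ξ₂ y - Dξ₂ y * ξ₁ y = W)
    (gt : ℝ → ℝ)
    (hgt : ∀ y : ℝ, gt y = (1 / W) *
      (ξ₂ y * (∫ z in (0:ℝ)..y, ξ₁ z * G z * (2 * lamt z)) +
       ξ₁ y * (∫ z in y..b0, ξ₂ z * G z * (2 * lamt z)))) :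
    ∃ Dgt : ℝ → ℝ,
      (∀ y ∈ Set.Ioo (0:ℝ) b0, HasDerivAt gt (lamt y * Dgt y) y) ∧
      (∀ y ∈ Set.Ioo (0:ℝ) b0,
        HasDerivAt Dgt
          (2 * lamt y * ((μ + (n:ℝ)^2 / (lamt y)^2) * gt y - G y)) y) :=
  variation_of_constants_solves_ode_general b0 μ hb0 n lamt hlamt_cont hlamt_lim G hG ξ₁ ξ₂ Dξ₁ Dξ₂
    hξ₁d hDξ₁d hξ₂d hDξ₂d hξ₁lim W hW hWr gt hgt
end

section
/- For all y ∈ (0, b₀]: ξ₂(y)·∫₀^y ξ₁(z)·2λ̃(z) dz ≤ W / inf_{z ∈ (0, y]} (μ + n²/λ̃(z)²). -/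
/-!
On `(0, y]` the coefficient `μ + n²/λ̃²` is at least its infimum `c > 0`, so
`c · ξ₁ · 2λ̃ ≤ (D_ũ ξ₁)'`. Integrating over `[t, y]` gives
`c ∫_t^y ξ₁ · 2λ̃ ≤ D_ũ ξ₁(y) - D_ũ ξ₁(t) ≤ D_ũ ξ₁(y)`, because `D_ũ ξ₁` is nondecreasing with
limit `0` at `0`. The integrand is nonnegative, so this uniform bound makes it integrable on
`(0, y]` and survives `t → 0`. Finally `ξ₂ · D_ũ ξ₁ = W + D_ũ ξ₂ · ξ₁ ≤ W`, since `D_ũ ξ₂ ≤ 0 ≤ ξ₁`.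
-/

open Filter Topology intervalIntegral Set MeasureTheory

theorem MonotoneOn.le_of_tendsto_nhdsGT {g : ℝ → ℝ} {a b L : ℝ} (hg : MonotoneOn g (Ioc a b))
    (hlim : Tendsto g (𝓝[>] a) (𝓝 L)) {x : ℝ} (hx : x ∈ Ioc a b) : L ≤ g x := by
  refine le_of_tendsto hlim ?_
  filter_upwards [Ioo_mem_nhdsGT hx.1] with w hw
  exact hg ⟨hw.1, hw.2.le.trans hx.2⟩ hx hw.2.le

theorem intervalIntegral_le_sub_of_hasDerivWithinAt_Ioc {F F' ψ : ℝ → ℝ} {a b t : ℝ}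
    (hF : ∀ x ∈ Ioc a b, HasDerivWithinAt F (F' x) (Ioc a b) x)
    (hψ : ContinuousOn ψ (Ioc a b)) (hψF : ∀ x ∈ Ioc a b, ψ x ≤ F' x) (ht : t ∈ Ioc a b) :
    ∫ x in t..b, ψ x ≤ F b - F t := by
  have hsub : Icc t b ⊆ Ioc a b := Icc_subset_Ioc ht.1 le_rfl
  refine intervalIntegral.integral_le_sub_of_hasDeriv_right_of_le ht.2
    (fun x hx => (hF x (hsub hx)).continuousWithinAt.mono hsub) (fun x hx => ?_)
    (hψ.mono hsub).integrableOn_Icc (fun x hx => hψF x (hsub (Ioo_subset_Icc_self hx)))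
  have hnhds : Ioc a b ∈ 𝓝 x := Ioc_mem_nhds (ht.1.trans hx.1) hx.2
  exact ((hF x (hsub (Ioo_subset_Icc_self hx))).hasDerivAt hnhds).hasDerivWithinAt

section ImproperIntegral

variable {f : ℝ → ℝ} {a b M : ℝ}

theorem integrableOn_Ioc_of_forall_intervalIntegral_le (hab : a < b)
    (hf : ContinuousOn f (Ioc a b)) (hnn : ∀ x ∈ Ioc a b, 0 ≤ f x)
    (hM : ∀ t ∈ Ioc a b, ∫ x in t..b, f x ≤ M) : IntegrableOn f (Ioc a b) := by
  set u : ℕ → ℝ := fun n => a + (b - a) * (1 / ((n : ℝ) + 1))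
  have hu : ∀ n, u n ∈ Ioc a b := fun n => by
    have h₀ : 0 < 1 / ((n : ℝ) + 1) := by positivity
    have h₁ : 1 / ((n : ℝ) + 1) ≤ 1 := by
      rw [div_le_one (by positivity)]; linarith [n.cast_nonneg (α := ℝ)]
    constructor <;> nlinarith
  have hu_lim : Tendsto u atTop (𝓝 a) := by
    have := (tendsto_const_nhds (x := a)).add
      ((tendsto_const_nhds (x := b - a)).mul tendsto_one_div_add_atTop_nhds_zero_nat)
    simpa only [mul_zero, add_zero] using this
  have hint : ∀ n, IntegrableOn f (Ioc (u n) b) := fun n =>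
    ((hf.mono (Icc_subset_Ioc (hu n).1 le_rfl)).integrableOn_Icc).mono_set Ioc_subset_Icc_self
  refine integrableOn_Ioc_of_intervalIntegral_norm_bounded_left (I := M) hint hu_lim
    (Eventually.of_forall fun n => ?_)
  calc ∫ x in Ioc (u n) b, ‖f x‖ = ∫ x in u n..b, f x := by
        rw [intervalIntegral.integral_of_le (hu n).2]
        refine setIntegral_congr_fun measurableSet_Ioc fun x hx => ?_
        exact Real.norm_of_nonneg (hnn x ⟨(hu n).1.trans hx.1, hx.2⟩)
    _ ≤ M := hM _ (hu n)

theorem intervalIntegral_le_of_forall_intervalIntegral_le (hab : a < b)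
    (hf : ContinuousOn f (Ioc a b)) (hnn : ∀ x ∈ Ioc a b, 0 ≤ f x)
    (hM : ∀ t ∈ Ioc a b, ∫ x in t..b, f x ≤ M) : ∫ x in a..b, f x ≤ M := by
  have hint : IntegrableOn f (uIcc a b) := by
    rw [uIcc_of_le hab.le, integrableOn_Icc_iff_integrableOn_Ioc]
    exact integrableOn_Ioc_of_forall_intervalIntegral_le hab hf hnn hM
  have hcont := intervalIntegral.continuousOn_primitive_interval_left hint
  rw [uIcc_of_le hab.le] at hcont
  refine ContinuousWithinAt.closure_le (s := Ioc a b) ?_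
    ((hcont a (left_mem_Icc.2 hab.le)).mono Ioc_subset_Icc_self) continuousWithinAt_const hM
  rw [closure_Ioc hab.ne]
  exact left_mem_Icc.2 hab.le

end ImproperIntegral

theorem xi_two_integral_bound_general
    (b0 μ : ℝ) (hμ : 0 < μ) (n : ℤ)
    (lamt : ℝ → ℝ)
    (hlamt_cont : ContinuousOn lamt (Set.Ioc 0 b0))
    (hlamt_pos : ∀ y ∈ Set.Ioc (0:ℝ) b0, 0 < lamt y)
    (ξ₁ ξ₂ Dξ₁ Dξ₂ : ℝ → ℝ)
    (hξ₁nn : ∀ y ∈ Set.Ioc (0:ℝ) b0, 0 ≤ ξ₁ y)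
    (hξ₂nn : ∀ y ∈ Set.Ioc (0:ℝ) b0, 0 ≤ ξ₂ y)
    (hξ₁d : ∀ y ∈ Set.Ioc (0:ℝ) b0,
      HasDerivWithinAt ξ₁ (lamt y * Dξ₁ y) (Set.Ioc 0 b0) y)
    (hDξ₁d : ∀ y ∈ Set.Ioc (0:ℝ) b0,
      HasDerivWithinAt Dξ₁ (2 * lamt y * ((μ + (n:ℝ)^2 / (lamt y)^2) * ξ₁ y))
        (Set.Ioc 0 b0) y)
    (hDξ₁mono : MonotoneOn Dξ₁ (Set.Ioc 0 b0))
    (hDξ₂mono : MonotoneOn Dξ₂ (Set.Ioc 0 b0))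
    (hDξ₁lim : Tendsto Dξ₁ (𝓝[>] (0:ℝ)) (𝓝 0))
    (hDξ₂b0 : Dξ₂ b0 < 0)
    (W : ℝ)
    (hWr : ∀ y ∈ Set.Ioc (0:ℝ) b0, Dξ₁ y * ξ₂ y - Dξ₂ y * ξ₁ y = W) :
    ∀ y ∈ Set.Ioc (0:ℝ) b0,
      ξ₂ y * (∫ z in (0:ℝ)..y, ξ₁ z * (2 * lamt z)) ≤
        W / sInf ((fun z => μ + (n:ℝ)^2 / (lamt z)^2) '' Set.Ioc 0 y) := by
  intro y hy
  set Φ : ℝ → ℝ := fun z => μ + (n:ℝ)^2 / (lamt z)^2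
  set c := sInf (Φ '' Ioc 0 y)
  have hμΦ : ∀ z ∈ Ioc 0 y, μ ≤ Φ z := fun z _ => le_add_of_nonneg_right (by positivity)
  have hc_pos : 0 < c :=
    hμ.trans_le (le_csInf ((nonempty_Ioc.2 hy.1).image Φ) (forall_mem_image.2 hμΦ))
  have hc_le : ∀ z ∈ Ioc 0 y, c ≤ Φ z :=
    fun z hz => csInf_le ⟨μ, forall_mem_image.2 hμΦ⟩ (mem_image_of_mem Φ hz)
  have hsub : Ioc 0 y ⊆ Ioc 0 b0 := Ioc_subset_Ioc_right hy.2
  have hξ₁_cont : ContinuousOn ξ₁ (Ioc 0 b0) := fun z hz => (hξ₁d z hz).continuousWithinAt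
  have hf_cont : ContinuousOn (fun z => ξ₁ z * (2 * lamt z)) (Ioc 0 y) :=
    (hξ₁_cont.mul (continuousOn_const.mul hlamt_cont)).mono hsub
  have hf_nn : ∀ z ∈ Ioc 0 y, 0 ≤ ξ₁ z * (2 * lamt z) :=
    fun z hz => mul_nonneg (hξ₁nn z (hsub hz)) (by linarith [hlamt_pos z (hsub hz)])
  have htail : ∀ t ∈ Ioc 0 y, ∫ z in t..y, ξ₁ z * (2 * lamt z) ≤ Dξ₁ y / c := by
    intro t ht
    have hFTC := intervalIntegral_le_sub_of_hasDerivWithinAt_Ioc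
      (ψ := fun z => c * (ξ₁ z * (2 * lamt z))) (fun x hx => (hDξ₁d x (hsub hx)).mono hsub)
      (continuousOn_const.mul hf_cont) (fun x hx => by nlinarith [hc_le x hx, hf_nn x hx]) ht
    rw [intervalIntegral.integral_const_mul] at hFTC
    rw [le_div_iff₀' hc_pos]
    linarith [hDξ₁mono.le_of_tendsto_nhdsGT hDξ₁lim (hsub ht)]
  have hDξ₂y : Dξ₂ y ≤ 0 := (hDξ₂mono hy ⟨hy.1.trans_le hy.2, le_rfl⟩ hy.2).trans hDξ₂b0.le
  calc ξ₂ y * ∫ z in (0:ℝ)..y, ξ₁ z * (2 * lamt z) ≤ ξ₂ y * (Dξ₁ y / c) :=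
        mul_le_mul_of_nonneg_left
          (intervalIntegral_le_of_forall_intervalIntegral_le hy.1 hf_cont hf_nn htail) (hξ₂nn y hy)
    _ = Dξ₁ y * ξ₂ y / c := by ring
    _ ≤ W / c := by
        gcongr
        nlinarith [hWr y hy, hξ₁nn y hy]

/-- for all y ∈ (0, b₀],
ξ₂(y)·∫₀^y ξ₁(z)·2λ̃(z) dz ≤ W / inf_{z ∈ (0,y]} (μ + n²/λ̃(z)²). -/
theorem xi_two_integral_bound
    (b0 μ : ℝ) (hb0 : 0 < b0) (hμ : 0 < μ) (n : ℤ) (hn : n ≠ 0)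
    (lamt : ℝ → ℝ)
    (hlamt_cont : ContinuousOn lamt (Set.Ioc 0 b0))
    (hlamt_pos : ∀ y ∈ Set.Ioc (0:ℝ) b0, 0 < lamt y)
    (hlamt_lim : Tendsto lamt (𝓝[>] (0:ℝ)) (𝓝 0))
    (ξ₁ ξ₂ Dξ₁ Dξ₂ : ℝ → ℝ)
    (hξ₁nn : ∀ y ∈ Set.Ioc (0:ℝ) b0, 0 ≤ ξ₁ y)
    (hξ₂nn : ∀ y ∈ Set.Ioc (0:ℝ) b0, 0 ≤ ξ₂ y)
    (hξ₁d : ∀ y ∈ Set.Ioc (0:ℝ) b0,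
      HasDerivWithinAt ξ₁ (lamt y * Dξ₁ y) (Set.Ioc 0 b0) y)
    (hDξ₁d : ∀ y ∈ Set.Ioc (0:ℝ) b0,
      HasDerivWithinAt Dξ₁ (2 * lamt y * ((μ + (n:ℝ)^2 / (lamt y)^2) * ξ₁ y))
        (Set.Ioc 0 b0) y)
    (hξ₂d : ∀ y ∈ Set.Ioc (0:ℝ) b0,
      HasDerivWithinAt ξ₂ (lamt y * Dξ₂ y) (Set.Ioc 0 b0) y)
    (hDξ₂d : ∀ y ∈ Set.Ioc (0:ℝ) b0,
      HasDerivWithinAt Dξ₂ (2 * lamt y * ((μ + (n:ℝ)^2 / (lamt y)^2) * ξ₂ y))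
        (Set.Ioc 0 b0) y)
    (hξ₁mono : MonotoneOn ξ₁ (Set.Ioc 0 b0))
    (hξ₁lim : Tendsto ξ₁ (𝓝[>] (0:ℝ)) (𝓝 0))
    (hξ₂anti : AntitoneOn ξ₂ (Set.Ioc 0 b0))
    (hξ₂b0 : ξ₂ b0 = 0)
    (hDξ₁mono : MonotoneOn Dξ₁ (Set.Ioc 0 b0))
    (hDξ₂mono : MonotoneOn Dξ₂ (Set.Ioc 0 b0))
    (hDξ₁lim : Tendsto Dξ₁ (𝓝[>] (0:ℝ)) (𝓝 0))
    (hDξ₂b0 : Dξ₂ b0 < 0)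
    (W : ℝ) (hW : 0 < W)
    (hWr : ∀ y ∈ Set.Ioc (0:ℝ) b0, Dξ₁ y * ξ₂ y - Dξ₂ y * ξ₁ y = W) :
    ∀ y ∈ Set.Ioc (0:ℝ) b0,
      ξ₂ y * (∫ z in (0:ℝ)..y, ξ₁ z * (2 * lamt z)) ≤
        W / sInf ((fun z => μ + (n:ℝ)^2 / (lamt z)^2) '' Set.Ioc 0 y) :=
  xi_two_integral_bound_general b0 μ hμ n lamt hlamt_cont hlamt_pos ξ₁ ξ₂ Dξ₁ Dξ₂ hξ₁nn hξ₂nn hξ₁d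
    hDξ₁d hDξ₁mono hDξ₂mono hDξ₁lim hDξ₂b0 W hWr
end

section
/- Define g̃(y) = (1/W)·[ ξ₂(y)·∫₀^y ξ₁(z)·G(z)·2λ̃(z) dz + ξ₁(y)·∫_y^{b₀} ξ₂(z)·G(z)·2λ̃(z) dz ] for y ∈ (0, b₀]. Then lim_{y→0⁺} g̃(y) = 0. -/
open Filter Topology intervalIntegral Set MeasureTheory

/-! Where `λ̃ ^ 2 ≤ c`, the equation `(D_ũ ξ)' = 2 λ̃ (μ + n² / λ̃²) ξ` with `n² ≥ 1` gives
`2 λ̃ ξ ≤ c (D_ũ ξ)'`, so with `M = sup |G|` every integral `∫ₐᵇ ξ G 2λ̃` is bounded by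
`M c (D_ũ ξ (b) - D_ũ ξ (a))`. For small `y` this bounds the first integral by `M c D_ũ ξ₁ (y)`
(as `D_ũ ξ₁ → 0`) and the second, up to a fixed tail `K`, by `-M c D_ũ ξ₂ (y)`. Weighted by
`ξ₂ (y)` and `ξ₁ (y)` these add up to `M c W`, so `|g̃ (y)| ≤ M c + ξ₁ (y) K / W`; here `c > 0` is
arbitrary and `ξ₁ (y) → 0`. -/

theorem abs_intervalIntegral_le_sub_of_hasDerivWithinAt {f g g' : ℝ → ℝ} {a b : ℝ} (hab : a ≤ b)
    (hg : ∀ x ∈ Icc a b, HasDerivWithinAt g (g' x) (Icc a b) x)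
    (hf : IntervalIntegrable f volume a b) (hfg : ∀ x ∈ Ioo a b, |f x| ≤ g' x) :
    |∫ x in a..b, f x| ≤ g b - g a :=
  (abs_integral_le_integral_abs hab).trans <|
    integral_le_sub_of_hasDeriv_right_of_le hab (fun x hx => (hg x hx).continuousWithinAt)
      (fun x hx => ((hg x (Ioo_subset_Icc_self hx)).hasDerivAt
        (Icc_mem_nhds hx.1 hx.2)).hasDerivWithinAt)
      ((intervalIntegrable_iff_integrableOn_Icc_of_le hab).1 hf.abs) hfg

theorem abs_intervalIntegral_le_sub_of_tendsto {f F : ℝ → ℝ} {a b L : ℝ} (hab : a < b)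
    (hf : IntegrableOn f (Icc a b)) (hF : Tendsto F (𝓝[>] a) (𝓝 L))
    (h : ∀ a' ∈ Ioo a b, |∫ x in a'..b, f x| ≤ F b - F a') :
    |∫ x in a..b, f x| ≤ F b - L := by
  have hprim : Tendsto (fun a' => ∫ x in a'..b, f x) (𝓝[>] a) (𝓝 (∫ x in a..b, f x)) := by
    rw [← uIcc_of_le hab.le] at hf
    have := continuousOn_primitive_interval_left hf a left_mem_uIcc
    rw [← nhdsWithin_Ioc_eq_nhdsGT hab]
    exact this.mono (uIcc_of_le hab.le ▸ Ioc_subset_Icc_self)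
  refine le_of_tendsto_of_tendsto hprim.abs (tendsto_const_nhds.sub hF) ?_
  filter_upwards [Ioo_mem_nhdsGT hab] with a' ha' using h a' ha'

theorem exists_forall_sq_le_of_tendsto_nhdsGT {lam : ℝ → ℝ} {b c : ℝ} (hb : 0 < b) (hc : 0 < c)
    (h : Tendsto lam (𝓝[>] 0) (𝓝 0)) : ∃ δ, 0 < δ ∧ δ ≤ b ∧ ∀ x ∈ Ioc 0 δ, lam x ^ 2 ≤ c := by
  have hsq : ∀ᶠ x in 𝓝[>] 0, lam x ^ 2 < c :=
    (h.pow 2).eventually (gt_mem_nhds (by rwa [zero_pow two_ne_zero]))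
  obtain ⟨δ, hδ, hδs⟩ := mem_nhdsGT_iff_exists_Ioc_subset.1 hsq
  exact ⟨min δ b, lt_min hδ hb, min_le_right _ _,
    fun x hx => (hδs ⟨hx.1, hx.2.trans (min_le_left _ _)⟩).le⟩

theorem tendsto_nhds_zero_of_forall_abs_le {l : Filter ℝ} {g h : ℝ → ℝ} {A : ℝ}
    (hh : Tendsto h l (𝓝 0)) (H : ∀ c > 0, ∃ K, ∀ᶠ y in l, |g y| ≤ A * c + h y * K) :
    Tendsto g l (𝓝 0) := by
  rw [Metric.tendsto_nhds]
  intro ε hε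
  set c := ε / (2 * (|A| + 1))
  have hc : 0 < c := by positivity
  have hAc : A * c < ε / 2 := by
    have : |A| * c < ε / 2 := by
      rw [mul_div_assoc', div_lt_iff₀ (by positivity)]
      nlinarith [abs_nonneg A]
    exact (mul_le_mul_of_nonneg_right (le_abs_self A) hc.le).trans_lt this
  obtain ⟨K, hK⟩ := H c hc
  have hhK : ∀ᶠ y in l, h y * K < ε / 2 := by
    have : Tendsto (fun y => h y * K) l (𝓝 0) := by simpa using hh.mul_const K
    exact this.eventually (gt_mem_nhds (half_pos hε))
  filter_upwards [hK, hhK] with y hy hyK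
  rw [Real.dist_eq, sub_zero]
  linarith

theorem abs_mul_mul_le_of_sq_le {ξ g l c μ m M : ℝ} (hξ : 0 ≤ ξ) (hg : |g| ≤ M) (hl : 0 < l)
    (hlc : l ^ 2 ≤ c) (hμ : 0 ≤ μ) (hm : 1 ≤ m) :
    |ξ * g * (2 * l)| ≤ M * c * (2 * l * ((μ + m / l ^ 2) * ξ)) := by
  have hcoef : 1 ≤ c * (μ + m / l ^ 2) := by
    have : 1 ≤ c * (m / l ^ 2) := by
      rw [← mul_div_assoc, le_div_iff₀ (by positivity)]
      nlinarith
    nlinarith [mul_nonneg (hlc.trans' (sq_nonneg l)) hμ]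
  have hM : 0 ≤ M := (abs_nonneg g).trans hg
  calc |ξ * g * (2 * l)| = ξ * |g| * (2 * l) := by
        rw [abs_mul, abs_mul, abs_of_nonneg hξ, abs_of_pos (by positivity : (0 : ℝ) < 2 * l)]
    _ ≤ M * (ξ * (2 * l)) * 1 := by nlinarith [mul_nonneg hξ hl.le]
    _ ≤ M * (ξ * (2 * l)) * (c * (μ + m / l ^ 2)) := by gcongr
    _ = M * c * (2 * l * ((μ + m / l ^ 2) * ξ)) := by ring

theorem abs_integral_le_of_hasDerivWithinAt_ode {s : Set ℝ} {μ c M a b : ℝ} {n : ℤ}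
    {lam G ξ Dξ : ℝ → ℝ} (hμ : 0 ≤ μ) (hn : n ≠ 0) (hab : a ≤ b) (hs : Icc a b ⊆ s)
    (hlam : ContinuousOn lam s) (hlam_pos : ∀ x ∈ s, 0 < lam x)
    (hlam_sq : ∀ x ∈ Icc a b, lam x ^ 2 ≤ c)
    (hG : ContinuousOn G s) (hGM : ∀ x ∈ s, |G x| ≤ M)
    (hξ : ContinuousOn ξ s) (hξ_nonneg : ∀ x ∈ s, 0 ≤ ξ x)
    (hDξ : ∀ x ∈ s, HasDerivWithinAt Dξ (2 * lam x * ((μ + (n : ℝ) ^ 2 / lam x ^ 2) * ξ x)) s x) :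
    |∫ x in a..b, ξ x * G x * (2 * lam x)| ≤ M * c * Dξ b - M * c * Dξ a := by
  have hn2 : (1 : ℝ) ≤ (n : ℝ) ^ 2 := by
    rw [one_le_sq_iff_one_le_abs, ← Int.cast_abs]
    exact_mod_cast Int.one_le_abs hn
  refine abs_intervalIntegral_le_sub_of_hasDerivWithinAt (g := fun x => M * c * Dξ x) hab
    (fun x hx => ((hDξ x (hs hx)).mono hs).const_mul (M * c))
    (((hξ.mul hG).mul (continuousOn_const.mul hlam)).mono hs |>.intervalIntegrable_of_Icc hab)
    fun x hx => ?_
  have hxs := hs (Ioo_subset_Icc_self hx)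
  exact abs_mul_mul_le_of_sq_le (hξ_nonneg x hxs) (hGM x hxs) (hlam_pos x hxs)
    (hlam_sq x (Ioo_subset_Icc_self hx)) hμ hn2

theorem abs_integral_zero_le_of_hasDerivWithinAt_ode {b μ c M y : ℝ} {n : ℤ}
    {lam G ξ Dξ : ℝ → ℝ} (hμ : 0 ≤ μ) (hn : n ≠ 0) (hy : 0 < y) (hyb : y ≤ b)
    (hlam : ContinuousOn lam (Ioc 0 b)) (hlam_pos : ∀ x ∈ Ioc 0 b, 0 < lam x)
    (hlam_sq : ∀ x ∈ Ioc 0 y, lam x ^ 2 ≤ c)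
    (hG : ContinuousOn G (Ioc 0 b)) (hGM : ∀ x ∈ Ioc 0 b, |G x| ≤ M)
    (hξ : ContinuousOn ξ (Ioc 0 b)) (hξ_nonneg : ∀ x ∈ Ioc 0 b, 0 ≤ ξ x)
    (hξ_mono : MonotoneOn ξ (Ioc 0 b))
    (hDξ : ∀ x ∈ Ioc 0 b,
      HasDerivWithinAt Dξ (2 * lam x * ((μ + (n : ℝ) ^ 2 / lam x ^ 2) * ξ x)) (Ioc 0 b) x)
    (hDξ_lim : Tendsto Dξ (𝓝[>] 0) (𝓝 0)) :
    |∫ x in 0..y, ξ x * G x * (2 * lam x)| ≤ M * c * Dξ y := by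
  have hsub : Ioc 0 y ⊆ Ioc 0 b := Ioc_subset_Ioc_right hyb
  have hint : IntegrableOn (fun x => ξ x * G x * (2 * lam x)) (Icc 0 y) := by
    rw [integrableOn_Icc_iff_integrableOn_Ioc]
    refine .of_bound measure_Ioc_lt_top
      ((((hξ.mul hG).mul (continuousOn_const.mul hlam)).mono hsub).aestronglyMeasurable
        measurableSet_Ioc) (ξ y * M * (2 * (c + 1))) ?_
    filter_upwards [ae_restrict_mem measurableSet_Ioc] with x hx
    have hxb := hsub hx
    have hξx : ξ x ≤ ξ y := hξ_mono hxb (hsub (right_mem_Ioc.2 hy)) hx.2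
    have hlx : lam x ≤ c + 1 := by nlinarith [hlam_sq x hx]
    rw [Real.norm_eq_abs, abs_mul, abs_mul, abs_of_nonneg (hξ_nonneg x hxb),
      abs_of_pos (by linarith [hlam_pos x hxb] : (0 : ℝ) < 2 * lam x)]
    have hξy : 0 ≤ ξ y := (hξ_nonneg x hxb).trans hξx
    exact mul_le_mul (mul_le_mul hξx (hGM x hxb) (abs_nonneg _) hξy) (by linarith)
      (by linarith [hlam_pos x hxb]) (mul_nonneg hξy ((abs_nonneg _).trans (hGM x hxb)))
  simpa using abs_intervalIntegral_le_sub_of_tendsto hy hint (hDξ_lim.const_mul (M * c))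
    fun a ha => abs_integral_le_of_hasDerivWithinAt_ode hμ hn ha.2.le
      (fun x hx => hsub ⟨ha.1.trans_le hx.1, hx.2⟩) hlam hlam_pos
      (fun x hx => hlam_sq x ⟨ha.1.trans_le hx.1, hx.2⟩) hG hGM hξ hξ_nonneg hDξ

theorem abs_integral_le_add_of_hasDerivWithinAt_ode {b μ c M y δ : ℝ} {n : ℤ}
    {lam G ξ Dξ : ℝ → ℝ} (hμ : 0 ≤ μ) (hn : n ≠ 0) (hy : 0 < y) (hyδ : y ≤ δ) (hδb : δ ≤ b)
    (hlam : ContinuousOn lam (Ioc 0 b)) (hlam_pos : ∀ x ∈ Ioc 0 b, 0 < lam x)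
    (hlam_sq : ∀ x ∈ Ioc 0 δ, lam x ^ 2 ≤ c)
    (hG : ContinuousOn G (Ioc 0 b)) (hGM : ∀ x ∈ Ioc 0 b, |G x| ≤ M)
    (hξ : ContinuousOn ξ (Ioc 0 b)) (hξ_nonneg : ∀ x ∈ Ioc 0 b, 0 ≤ ξ x)
    (hDξ : ∀ x ∈ Ioc 0 b,
      HasDerivWithinAt Dξ (2 * lam x * ((μ + (n : ℝ) ^ 2 / lam x ^ 2) * ξ x)) (Ioc 0 b) x) :
    |∫ x in y..b, ξ x * G x * (2 * lam x)|
      ≤ M * c * -Dξ y + (M * c * Dξ δ + |∫ x in δ..b, ξ x * G x * (2 * lam x)|) := by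
  have hf : ContinuousOn (fun x => ξ x * G x * (2 * lam x)) (Ioc 0 b) :=
    (hξ.mul hG).mul (continuousOn_const.mul hlam)
  have hyδs : Icc y δ ⊆ Ioc 0 b := fun x hx => ⟨hy.trans_le hx.1, hx.2.trans hδb⟩
  have hδbs : Icc δ b ⊆ Ioc 0 b := fun x hx => ⟨hy.trans_le (hyδ.trans hx.1), hx.2⟩
  have hyδ_int := (hf.mono hyδs).intervalIntegrable_of_Icc (μ := volume) hyδ
  have hδb_int := (hf.mono hδbs).intervalIntegrable_of_Icc (μ := volume) hδb
  have hyδ_le := abs_integral_le_of_hasDerivWithinAt_ode hμ hn hyδ hyδs hlam hlam_pos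
    (fun x hx => hlam_sq x ⟨hy.trans_le hx.1, hx.2⟩) hG hGM hξ hξ_nonneg hDξ
  rw [← integral_add_adjacent_intervals hyδ_int hδb_int]
  linarith [abs_add_le (∫ x in y..δ, ξ x * G x * (2 * lam x))
    (∫ x in δ..b, ξ x * G x * (2 * lam x))]

theorem abs_one_div_mul_add_le_of_wronskian {W x₁ x₂ D₁ D₂ I₁ I₂ A K : ℝ} (hW : 0 < W)
    (hx₁ : 0 ≤ x₁) (hx₂ : 0 ≤ x₂) (hwr : D₁ * x₂ - D₂ * x₁ = W)
    (hI₁ : |I₁| ≤ A * D₁) (hI₂ : |I₂| ≤ A * -D₂ + K) :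
    |1 / W * (x₂ * I₁ + x₁ * I₂)| ≤ A + x₁ * (K / W) := by
  have hsum : |x₂ * I₁ + x₁ * I₂| ≤ A * W + x₁ * K := by
    calc |x₂ * I₁ + x₁ * I₂| ≤ x₂ * |I₁| + x₁ * |I₂| := by
          simpa [abs_mul, abs_of_nonneg hx₁, abs_of_nonneg hx₂] using abs_add_le (x₂ * I₁) (x₁ * I₂)
      _ ≤ x₂ * (A * D₁) + x₁ * (A * -D₂ + K) := by gcongr
      _ = A * W + x₁ * K := by rw [← hwr]; ring
  rw [abs_mul, abs_of_pos (one_div_pos.2 hW), one_div_mul_eq_div, div_le_iff₀ hW]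
  calc |x₂ * I₁ + x₁ * I₂| ≤ A * W + x₁ * K := hsum
    _ = (A + x₁ * (K / W)) * W := by field_simp

theorem gt_tendsto_zero_general
    (b0 μ : ℝ) (hb0 : 0 < b0) (hμ : 0 < μ) (n : ℤ) (hn : n ≠ 0)
    (lamt : ℝ → ℝ)
    (hlamt_cont : ContinuousOn lamt (Set.Ioc 0 b0))
    (hlamt_pos : ∀ y ∈ Set.Ioc (0:ℝ) b0, 0 < lamt y)
    (hlamt_lim : Tendsto lamt (𝓝[>] (0:ℝ)) (𝓝 0))
    (G : ℝ → ℝ) (hG : ContinuousOn G (Set.Icc 0 b0))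
    (ξ₁ ξ₂ Dξ₁ Dξ₂ : ℝ → ℝ)
    (hξ₁nn : ∀ y ∈ Set.Ioc (0:ℝ) b0, 0 ≤ ξ₁ y)
    (hξ₂nn : ∀ y ∈ Set.Ioc (0:ℝ) b0, 0 ≤ ξ₂ y)
    (hξ₁d : ∀ y ∈ Set.Ioc (0:ℝ) b0,
      HasDerivWithinAt ξ₁ (lamt y * Dξ₁ y) (Set.Ioc 0 b0) y)
    (hDξ₁d : ∀ y ∈ Set.Ioc (0:ℝ) b0,
      HasDerivWithinAt Dξ₁ (2 * lamt y * ((μ + (n:ℝ)^2 / (lamt y)^2) * ξ₁ y))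
        (Set.Ioc 0 b0) y)
    (hξ₂d : ∀ y ∈ Set.Ioc (0:ℝ) b0,
      HasDerivWithinAt ξ₂ (lamt y * Dξ₂ y) (Set.Ioc 0 b0) y)
    (hDξ₂d : ∀ y ∈ Set.Ioc (0:ℝ) b0,
      HasDerivWithinAt Dξ₂ (2 * lamt y * ((μ + (n:ℝ)^2 / (lamt y)^2) * ξ₂ y))
        (Set.Ioc 0 b0) y)
    (hξ₁mono : MonotoneOn ξ₁ (Set.Ioc 0 b0))
    (hξ₁lim : Tendsto ξ₁ (𝓝[>] (0:ℝ)) (𝓝 0))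
    (hDξ₁lim : Tendsto Dξ₁ (𝓝[>] (0:ℝ)) (𝓝 0))
    (W : ℝ) (hW : 0 < W)
    (hWr : ∀ y ∈ Set.Ioc (0:ℝ) b0, Dξ₁ y * ξ₂ y - Dξ₂ y * ξ₁ y = W)
    (gt : ℝ → ℝ)
    (hgt : ∀ y : ℝ, gt y = (1 / W) *
      (ξ₂ y * (∫ z in (0:ℝ)..y, ξ₁ z * G z * (2 * lamt z)) +
       ξ₁ y * (∫ z in y..b0, ξ₂ z * G z * (2 * lamt z)))) :
    Tendsto gt (𝓝[>] (0:ℝ)) (𝓝 0) := by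
  have hξ₁c : ContinuousOn ξ₁ (Ioc 0 b0) := fun y hy => (hξ₁d y hy).continuousWithinAt
  have hξ₂c : ContinuousOn ξ₂ (Ioc 0 b0) := fun y hy => (hξ₂d y hy).continuousWithinAt
  have hG' : ContinuousOn G (Ioc 0 b0) := hG.mono Ioc_subset_Icc_self
  obtain ⟨M, hM⟩ := isCompact_Icc.exists_bound_of_continuousOn hG
  have hGM : ∀ x ∈ Ioc 0 b0, |G x| ≤ M := fun x hx => hM x (Ioc_subset_Icc_self hx)
  refine tendsto_nhds_zero_of_forall_abs_le (A := M) hξ₁lim fun c hc => ?_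
  obtain ⟨δ, hδ, hδb, hlam⟩ := exists_forall_sq_le_of_tendsto_nhdsGT hb0 hc hlamt_lim
  refine ⟨(M * c * Dξ₂ δ + |∫ z in δ..b0, ξ₂ z * G z * (2 * lamt z)|) / W, ?_⟩
  filter_upwards [Ioo_mem_nhdsGT hδ] with y ⟨hy, hyδ⟩
  have hyb : y ∈ Ioc 0 b0 := ⟨hy, (hyδ.trans_le hδb).le⟩
  rw [hgt]
  exact abs_one_div_mul_add_le_of_wronskian hW (hξ₁nn y hyb) (hξ₂nn y hyb) (hWr y hyb)
    (abs_integral_zero_le_of_hasDerivWithinAt_ode hμ.le hn hy hyb.2 hlamt_cont hlamt_pos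
      (fun x hx => hlam x ⟨hx.1, hx.2.trans hyδ.le⟩) hG' hGM hξ₁c hξ₁nn hξ₁mono hDξ₁d hDξ₁lim)
    (abs_integral_le_add_of_hasDerivWithinAt_ode hμ.le hn hy hyδ.le hδb hlamt_cont hlamt_pos
      hlam hG' hGM hξ₂c hξ₂nn hDξ₂d)

/-- the function g̃ built by the variation-of-constants formula
satisfies lim_{y→0⁺} g̃(y) = 0. -/
theorem gt_tendsto_zero
    (b0 μ : ℝ) (hb0 : 0 < b0) (hμ : 0 < μ) (n : ℤ) (hn : n ≠ 0)
    (lamt : ℝ → ℝ)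
    (hlamt_cont : ContinuousOn lamt (Set.Ioc 0 b0))
    (hlamt_pos : ∀ y ∈ Set.Ioc (0:ℝ) b0, 0 < lamt y)
    (hlamt_lim : Tendsto lamt (𝓝[>] (0:ℝ)) (𝓝 0))
    (G : ℝ → ℝ) (hG : ContinuousOn G (Set.Icc 0 b0))
    (ξ₁ ξ₂ Dξ₁ Dξ₂ : ℝ → ℝ)
    (hξ₁nn : ∀ y ∈ Set.Ioc (0:ℝ) b0, 0 ≤ ξ₁ y)
    (hξ₂nn : ∀ y ∈ Set.Ioc (0:ℝ) b0, 0 ≤ ξ₂ y)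
    (hξ₁d : ∀ y ∈ Set.Ioc (0:ℝ) b0,
      HasDerivWithinAt ξ₁ (lamt y * Dξ₁ y) (Set.Ioc 0 b0) y)
    (hDξ₁d : ∀ y ∈ Set.Ioc (0:ℝ) b0,
      HasDerivWithinAt Dξ₁ (2 * lamt y * ((μ + (n:ℝ)^2 / (lamt y)^2) * ξ₁ y))
        (Set.Ioc 0 b0) y)
    (hξ₂d : ∀ y ∈ Set.Ioc (0:ℝ) b0,
      HasDerivWithinAt ξ₂ (lamt y * Dξ₂ y) (Set.Ioc 0 b0) y)
    (hDξ₂d : ∀ y ∈ Set.Ioc (0:ℝ) b0,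
      HasDerivWithinAt Dξ₂ (2 * lamt y * ((μ + (n:ℝ)^2 / (lamt y)^2) * ξ₂ y))
        (Set.Ioc 0 b0) y)
    (hξ₁mono : MonotoneOn ξ₁ (Set.Ioc 0 b0))
    (hξ₁lim : Tendsto ξ₁ (𝓝[>] (0:ℝ)) (𝓝 0))
    (hξ₂anti : AntitoneOn ξ₂ (Set.Ioc 0 b0))
    (hξ₂b0 : ξ₂ b0 = 0)
    (hDξ₁mono : MonotoneOn Dξ₁ (Set.Ioc 0 b0))
    (hDξ₂mono : MonotoneOn Dξ₂ (Set.Ioc 0 b0))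
    (hDξ₁lim : Tendsto Dξ₁ (𝓝[>] (0:ℝ)) (𝓝 0))
    (hDξ₂b0 : Dξ₂ b0 < 0)
    (W : ℝ) (hW : 0 < W)
    (hWr : ∀ y ∈ Set.Ioc (0:ℝ) b0, Dξ₁ y * ξ₂ y - Dξ₂ y * ξ₁ y = W)
    (gt : ℝ → ℝ)
    (hgt : ∀ y : ℝ, gt y = (1 / W) *
      (ξ₂ y * (∫ z in (0:ℝ)..y, ξ₁ z * G z * (2 * lamt z)) +
       ξ₁ y * (∫ z in y..b0, ξ₂ z * G z * (2 * lamt z)))) :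
    Tendsto gt (𝓝[>] (0:ℝ)) (𝓝 0) :=
  gt_tendsto_zero_general b0 μ hb0 hμ n hn lamt hlamt_cont hlamt_pos hlamt_lim G hG ξ₁ ξ₂ Dξ₁ Dξ₂
    hξ₁nn hξ₂nn hξ₁d hDξ₁d hξ₂d hDξ₂d hξ₁mono hξ₁lim hDξ₁lim W hW hWr gt hgt
end

section
/- Define g̃(y) = (1/W)·[ ξ₂(y)·∫₀^y ξ₁(z)·G(z)·2λ̃(z) dz + ξ₁(y)·∫_y^{b₀} ξ₂(z)·G(z)·2λ̃(z) dz ] for y ∈ (0, b₀]. Then its generalized derivative satisfies D_ũ g̃(y) = (1/W)·[ D_ũξ₁(y)·∫_y^{b₀} ξ₂(z)·G(z)·2λ̃(z) dz + D_ũξ₂(y)·∫₀^y ξ₁(z)·G(z)·2λ̃(z) dz ], and lim_{y→0⁺} D_ũ g̃(y) = 0. -/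
/-!
All integrals exist because `ξ₁ G 2λ̃` and `G 2λ̃` have limits at `0`. Differentiating `g̃` by the
product rule and the fundamental theorem of calculus, the two boundary terms `± ξ₁ ξ₂ G 2λ̃` cancel.
For the limit, `W · D_ũ g̃ (y) = ∫₀^{b₀} K(y, z) G(z) 2λ̃(z) dz`, where
`K(y, z) = D_ũξ₂(y) ξ₁(z)` for `z ≤ y` and `D_ũξ₁(y) ξ₂(z)` for `z > y` is `W` times the
`D_ũ`-derivative of the Green function. Monotonicity of `D_ũξᵢ` and the Wronskian identity give
`|K| ≤ W`, and `K(y, z) → 0` for fixed `z` because `D_ũξ₁(y) → 0`, so dominated convergence applies.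
-/

open Filter Topology intervalIntegral Set MeasureTheory
open scoped Interval

lemma intervalIntegrable_of_continuousOn_Ioc_of_tendsto {E : Type*} [NormedAddCommGroup E]
    {f : ℝ → E} {a b : ℝ} {c : E} (hab : a ≤ b) (hf : ContinuousOn f (Ioc a b))
    (hlim : Tendsto f (𝓝[>] a) (𝓝 c)) : IntervalIntegrable f volume a b := by
  classical
  have hext : ContinuousOn (Function.update f a c) (Icc a b) := by
    intro x hx
    rcases eq_or_lt_of_le hx.1 with rfl | hax
    · rw [continuousWithinAt_update_same]
      exact hlim.mono_left (nhdsWithin_mono _ fun z hz => lt_of_le_of_ne hz.1.1 (Ne.symm hz.2))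
    · rw [continuousWithinAt_update_of_ne hax.ne']
      refine (hf x ⟨hax, hx.2⟩).mono_of_mem_nhdsWithin ?_
      exact mem_of_superset (inter_mem_nhdsWithin _ (Ioi_mem_nhds hax)) fun z hz => ⟨hz.2, hz.1.2⟩
  refine (intervalIntegrable_congr fun z hz => ?_).mp (hext.intervalIntegrable_of_Icc hab)
  rw [uIoc_of_le hab] at hz
  exact Function.update_of_ne hz.1.ne' _ _

lemma MonotoneOn.nonneg_of_tendsto_nhdsGT {f : ℝ → ℝ} {a b y : ℝ} (hf : MonotoneOn f (Ioc a b))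
    (hlim : Tendsto f (𝓝[>] a) (𝓝 0)) (hy : y ∈ Ioc a b) : 0 ≤ f y :=
  le_of_tendsto hlim <| by
    filter_upwards [Ioo_mem_nhdsGT hy.1] with t ht using hf ⟨ht.1, ht.2.le.trans hy.2⟩ hy ht.2.le

noncomputable def greenDerivKernel (u v Du Dv : ℝ → ℝ) (y z : ℝ) : ℝ :=
  if z ≤ y then Dv y * u z else Du y * v z

section

variable {u v Du Dv g : ℝ → ℝ} {a b y W : ℝ}

lemma integral_greenDerivKernel_mul (hay : a ≤ y) (hyb : y ≤ b)
    (hu : IntervalIntegrable (fun z => u z * g z) volume a y)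
    (hv : IntervalIntegrable (fun z => v z * g z) volume y b) :
    IntervalIntegrable (fun z => greenDerivKernel u v Du Dv y z * g z) volume a b ∧
    ∫ z in a..b, greenDerivKernel u v Du Dv y z * g z =
      Dv y * (∫ z in a..y, u z * g z) + Du y * ∫ z in y..b, v z * g z := by
  have hleft : EqOn (fun z => Dv y * (u z * g z))
      (fun z => greenDerivKernel u v Du Dv y z * g z) (Ι a y) := fun z hz => by
    rw [uIoc_of_le hay] at hz
    simp only [greenDerivKernel, if_pos hz.2, mul_assoc]
  have hright : EqOn (fun z => Du y * (v z * g z))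
      (fun z => greenDerivKernel u v Du Dv y z * g z) (Ι y b) := fun z hz => by
    rw [uIoc_of_le hyb] at hz
    simp only [greenDerivKernel, if_neg hz.1.not_ge, mul_assoc]
  have hKa := (intervalIntegrable_congr hleft).mp (hu.const_mul (Dv y))
  have hKb := (intervalIntegrable_congr hright).mp (hv.const_mul (Du y))
  refine ⟨hKa.trans hKb, ?_⟩
  rw [← integral_add_adjacent_intervals hKa hKb,
    ← integral_congr_ae (ae_of_all _ fun z hz => hleft hz),
    ← integral_congr_ae (ae_of_all _ fun z hz => hright hz),
    intervalIntegral.integral_const_mul, intervalIntegral.integral_const_mul]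

lemma abs_greenDerivKernel_le (hu : ∀ z ∈ Ioc a b, 0 ≤ u z) (hv : ∀ z ∈ Ioc a b, 0 ≤ v z)
    (hDu : ∀ z ∈ Ioc a b, 0 ≤ Du z) (hDv : ∀ z ∈ Ioc a b, Dv z ≤ 0)
    (hDu_mono : MonotoneOn Du (Ioc a b)) (hDv_mono : MonotoneOn Dv (Ioc a b))
    (hW : ∀ z ∈ Ioc a b, Du z * v z - Dv z * u z = W) {z : ℝ}
    (hy : y ∈ Ioc a b) (hz : z ∈ Ioc a b) : |greenDerivKernel u v Du Dv y z| ≤ W := by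
  have hWz := hW z hz
  unfold greenDerivKernel
  split_ifs with hzy
  · have := hDv_mono hz hy hzy
    rw [abs_of_nonpos (mul_nonpos_of_nonpos_of_nonneg (hDv y hy) (hu z hz))]
    nlinarith [hu z hz, hDu z hz, hv z hz]
  · have := hDu_mono hy hz (not_le.mp hzy).le
    rw [abs_of_nonneg (mul_nonneg (hDu y hy) (hv z hz))]
    nlinarith [hu z hz, hDv z hz, hv z hz]

lemma tendsto_greenDerivKernel (hDu : Tendsto Du (𝓝[>] a) (𝓝 0)) {z : ℝ} (hz : a < z) :
    Tendsto (fun y => greenDerivKernel u v Du Dv y z) (𝓝[>] a) (𝓝 0) := by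
  have hK : (fun y => Du y * v z) =ᶠ[𝓝[>] a] fun y => greenDerivKernel u v Du Dv y z := by
    filter_upwards [Ioo_mem_nhdsGT hz] with y hy
    simp only [greenDerivKernel, if_neg hy.2.not_ge]
  simpa using (hDu.mul_const (v z)).congr' hK

lemma tendsto_integral_greenDerivKernel_mul (hab : a < b) (hg : IntervalIntegrable g volume a b)
    (hu : ∀ y ∈ Ioc a b, IntervalIntegrable (fun z => u z * g z) volume a y)
    (hv : ∀ y ∈ Ioc a b, IntervalIntegrable (fun z => v z * g z) volume y b)
    (hK : ∀ y ∈ Ioc a b, ∀ z ∈ Ioc a b, |greenDerivKernel u v Du Dv y z| ≤ W)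
    (hDu : Tendsto Du (𝓝[>] a) (𝓝 0)) :
    Tendsto (fun y => ∫ z in a..b, greenDerivKernel u v Du Dv y z * g z) (𝓝[>] a) (𝓝 0) := by
  have hy : ∀ᶠ y in 𝓝[>] a, y ∈ Ioc a b := Ioc_mem_nhdsGT hab
  simpa only [intervalIntegral.integral_zero] using tendsto_integral_filter_of_dominated_convergence
    (F := fun y z => greenDerivKernel u v Du Dv y z * g z) (f := fun _ => 0) (fun z => W * ‖g z‖)
    (hy.mono fun y hy => by
      rw [uIoc_of_le hab.le]
      exact (integral_greenDerivKernel_mul (Du := Du) (Dv := Dv) hy.1.le hy.2 (hu y hy)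
        (hv y hy)).1.aestronglyMeasurable)
    (hy.mono fun y hy => ae_of_all _ fun z hz => by
      rw [uIoc_of_le hab.le] at hz
      rw [norm_mul, Real.norm_eq_abs]
      exact mul_le_mul_of_nonneg_right (hK y hy z hz) (norm_nonneg _))
    (hg.norm.const_mul W)
    (ae_of_all _ fun z hz => by
      rw [uIoc_of_le hab.le] at hz
      simpa using (tendsto_greenDerivKernel hDu hz.1).mul_const (g z))

lemma tendsto_mul_integral_add_mul_integral (hab : a < b) (hg : IntervalIntegrable g volume a b)
    (hu_int : ∀ y ∈ Ioc a b, IntervalIntegrable (fun z => u z * g z) volume a y)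
    (hv_int : ∀ y ∈ Ioc a b, IntervalIntegrable (fun z => v z * g z) volume y b)
    (hu : ∀ z ∈ Ioc a b, 0 ≤ u z) (hv : ∀ z ∈ Ioc a b, 0 ≤ v z) (hDv : ∀ z ∈ Ioc a b, Dv z ≤ 0)
    (hDu_mono : MonotoneOn Du (Ioc a b)) (hDv_mono : MonotoneOn Dv (Ioc a b))
    (hW : ∀ z ∈ Ioc a b, Du z * v z - Dv z * u z = W) (hDu : Tendsto Du (𝓝[>] a) (𝓝 0)) :
    Tendsto (fun y => Du y * (∫ z in y..b, v z * g z) + Dv y * ∫ z in a..y, u z * g z)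
      (𝓝[>] a) (𝓝 0) := by
  have hK y (hy : y ∈ Ioc a b) z (hz : z ∈ Ioc a b) :=
    abs_greenDerivKernel_le hu hv (fun _ => hDu_mono.nonneg_of_tendsto_nhdsGT hDu) hDv hDu_mono
      hDv_mono hW hy hz
  refine (tendsto_integral_greenDerivKernel_mul hab hg hu_int hv_int hK hDu).congr' ?_
  filter_upwards [Ioc_mem_nhdsGT hab] with y hy
  rw [(integral_greenDerivKernel_mul hy.1.le hy.2 (hu_int y hy) (hv_int y hy)).2, add_comm]

lemma hasDerivAt_mul_integral_add_mul_integral {u' v' : ℝ} (hu : HasDerivAt u u' y)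
    (hv : HasDerivAt v v' y) (hg : ContinuousAt g y)
    (hug : IntervalIntegrable (fun z => u z * g z) volume a y)
    (hvg : IntervalIntegrable (fun z => v z * g z) volume y b)
    (hug_meas : StronglyMeasurableAtFilter (fun z => u z * g z) (𝓝 y))
    (hvg_meas : StronglyMeasurableAtFilter (fun z => v z * g z) (𝓝 y)) :
    HasDerivAt (fun x => v x * (∫ z in a..x, u z * g z) + u x * ∫ z in x..b, v z * g z)
      (v' * (∫ z in a..y, u z * g z) + u' * ∫ z in y..b, v z * g z) y := by
  have hA := integral_hasDerivAt_right hug hug_meas (hu.continuousAt.mul hg)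
  have hB := integral_hasDerivAt_left hvg hvg_meas (hv.continuousAt.mul hg)
  exact ((hv.mul hA).add (hu.mul hB)).congr_deriv (by ring)

end

/-- The generalized derivative `D_ũ g̃ = g̃′ / λ̃` is encoded by `g̃′(y) = λ̃(y) · Dgt(y)`. -/
theorem Dgt_formula_and_limit_general
    (b0 : ℝ) (hb0 : 0 < b0)
    (lamt : ℝ → ℝ)
    (hlamt_cont : ContinuousOn lamt (Set.Ioc 0 b0))
    (hlamt_lim : Tendsto lamt (𝓝[>] (0:ℝ)) (𝓝 0))
    (G : ℝ → ℝ) (hG : ContinuousOn G (Set.Icc 0 b0))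
    (ξ₁ ξ₂ Dξ₁ Dξ₂ : ℝ → ℝ)
    (hξ₁nn : ∀ y ∈ Set.Ioc (0:ℝ) b0, 0 ≤ ξ₁ y)
    (hξ₂nn : ∀ y ∈ Set.Ioc (0:ℝ) b0, 0 ≤ ξ₂ y)
    (hξ₁d : ∀ y ∈ Set.Ioc (0:ℝ) b0,
      HasDerivWithinAt ξ₁ (lamt y * Dξ₁ y) (Set.Ioc 0 b0) y)
    (hξ₂d : ∀ y ∈ Set.Ioc (0:ℝ) b0,
      HasDerivWithinAt ξ₂ (lamt y * Dξ₂ y) (Set.Ioc 0 b0) y)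
    (hξ₁lim : Tendsto ξ₁ (𝓝[>] (0:ℝ)) (𝓝 0))
    (hDξ₁mono : MonotoneOn Dξ₁ (Set.Ioc 0 b0))
    (hDξ₂mono : MonotoneOn Dξ₂ (Set.Ioc 0 b0))
    (hDξ₁lim : Tendsto Dξ₁ (𝓝[>] (0:ℝ)) (𝓝 0))
    (hDξ₂b0 : Dξ₂ b0 < 0)
    (W : ℝ)
    (hWr : ∀ y ∈ Set.Ioc (0:ℝ) b0, Dξ₁ y * ξ₂ y - Dξ₂ y * ξ₁ y = W)
    (gt : ℝ → ℝ)
    (hgt : ∀ y : ℝ, gt y = (1 / W) *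
      (ξ₂ y * (∫ z in (0:ℝ)..y, ξ₁ z * G z * (2 * lamt z)) +
       ξ₁ y * (∫ z in y..b0, ξ₂ z * G z * (2 * lamt z))))
    (Dgt : ℝ → ℝ)
    (hDgt : ∀ y : ℝ, Dgt y = (1 / W) *
      (Dξ₁ y * (∫ z in y..b0, ξ₂ z * G z * (2 * lamt z)) +
       Dξ₂ y * (∫ z in (0:ℝ)..y, ξ₁ z * G z * (2 * lamt z)))) :
    (∀ y ∈ Set.Ioo (0:ℝ) b0, HasDerivAt gt (lamt y * Dgt y) y) ∧
    Tendsto Dgt (𝓝[>] (0:ℝ)) (𝓝 0) := by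
  set g : ℝ → ℝ := fun z => G z * (2 * lamt z)
  simp only [mul_assoc] at hgt hDgt
  have hξ₁c : ContinuousOn ξ₁ (Ioc 0 b0) := fun y hy => (hξ₁d y hy).continuousWithinAt
  have hξ₂c : ContinuousOn ξ₂ (Ioc 0 b0) := fun y hy => (hξ₂d y hy).continuousWithinAt
  have hgc : ContinuousOn g (Ioc 0 b0) :=
    (hG.mono Ioc_subset_Icc_self).mul (continuousOn_const.mul hlamt_cont)
  have hg_lim : Tendsto g (𝓝[>] 0) (𝓝 (G 0 * (2 * 0))) :=
    ((hG 0 ⟨le_rfl, hb0.le⟩).tendsto.mono_left (nhdsWithin_le_of_mem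
      (mem_of_superset (Ioc_mem_nhdsGT hb0) Ioc_subset_Icc_self))).mul (hlamt_lim.const_mul 2)
  have hξ₁g : ∀ y ∈ Ioc 0 b0, IntervalIntegrable (fun z => ξ₁ z * g z) volume 0 y :=
    fun y hy => intervalIntegrable_of_continuousOn_Ioc_of_tendsto hy.1.le
      ((hξ₁c.mul hgc).mono (Ioc_subset_Ioc_right hy.2)) (hξ₁lim.mul hg_lim)
  have hξ₂g : ∀ y ∈ Ioc 0 b0, IntervalIntegrable (fun z => ξ₂ z * g z) volume y b0 :=
    fun y hy => ContinuousOn.intervalIntegrable_of_Icc hy.2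
      ((hξ₂c.mul hgc).mono fun z hz => ⟨hy.1.trans_le hz.1, hz.2⟩)
  refine ⟨fun y hy => ?_, ?_⟩
  · have hy' : y ∈ Ioc 0 b0 := Ioo_subset_Ioc_self hy
    have hnhds : Ioc 0 b0 ∈ 𝓝 y := Ioc_mem_nhds hy.1 hy.2
    have hmeas {f : ℝ → ℝ} (hf : ContinuousOn f (Ioc 0 b0)) : StronglyMeasurableAtFilter f (𝓝 y) :=
      ⟨_, hnhds, hf.aestronglyMeasurable measurableSet_Ioc⟩
    rw [show gt = _ from funext hgt, hDgt]
    exact ((hasDerivAt_mul_integral_add_mul_integral ((hξ₁d y hy').hasDerivAt hnhds)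
      ((hξ₂d y hy').hasDerivAt hnhds) ((hgc y hy').continuousAt hnhds) (hξ₁g y hy')
      (hξ₂g y hy') (hmeas (hξ₁c.mul hgc)) (hmeas (hξ₂c.mul hgc))).const_mul (1 / W)).congr_deriv
      (by ring)
  · rw [show Dgt = _ from funext hDgt]
    simpa using (tendsto_mul_integral_add_mul_integral hb0
      (intervalIntegrable_of_continuousOn_Ioc_of_tendsto hb0.le hgc hg_lim) hξ₁g hξ₂g hξ₁nn hξ₂nn
      (fun z hz => (hDξ₂mono hz ⟨hb0, le_rfl⟩ hz.2).trans hDξ₂b0.le) hDξ₁mono hDξ₂mono hWr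
      hDξ₁lim).const_mul (1 / W)

/-- the generalized derivative of g̃ is given by
D_ũg̃(y) = (1/W)·[D_ũξ₁(y)·∫_y^{b₀} ξ₂ G 2λ̃ + D_ũξ₂(y)·∫₀^y ξ₁ G 2λ̃]
(encoded by g̃′(y) = λ̃(y)·D_ũg̃(y) on (0,b₀)), and lim_{y→0⁺} D_ũg̃(y) = 0. -/
theorem Dgt_formula_and_limit
    (b0 μ : ℝ) (hb0 : 0 < b0) (hμ : 0 < μ) (n : ℤ) (hn : n ≠ 0)
    (lamt : ℝ → ℝ)
    (hlamt_cont : ContinuousOn lamt (Set.Ioc 0 b0))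
    (hlamt_pos : ∀ y ∈ Set.Ioc (0:ℝ) b0, 0 < lamt y)
    (hlamt_lim : Tendsto lamt (𝓝[>] (0:ℝ)) (𝓝 0))
    (G : ℝ → ℝ) (hG : ContinuousOn G (Set.Icc 0 b0))
    (ξ₁ ξ₂ Dξ₁ Dξ₂ : ℝ → ℝ)
    (hξ₁nn : ∀ y ∈ Set.Ioc (0:ℝ) b0, 0 ≤ ξ₁ y)
    (hξ₂nn : ∀ y ∈ Set.Ioc (0:ℝ) b0, 0 ≤ ξ₂ y)
    (hξ₁d : ∀ y ∈ Set.Ioc (0:ℝ) b0,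
      HasDerivWithinAt ξ₁ (lamt y * Dξ₁ y) (Set.Ioc 0 b0) y)
    (hDξ₁d : ∀ y ∈ Set.Ioc (0:ℝ) b0,
      HasDerivWithinAt Dξ₁ (2 * lamt y * ((μ + (n:ℝ)^2 / (lamt y)^2) * ξ₁ y))
        (Set.Ioc 0 b0) y)
    (hξ₂d : ∀ y ∈ Set.Ioc (0:ℝ) b0,
      HasDerivWithinAt ξ₂ (lamt y * Dξ₂ y) (Set.Ioc 0 b0) y)
    (hDξ₂d : ∀ y ∈ Set.Ioc (0:ℝ) b0,
      HasDerivWithinAt Dξ₂ (2 * lamt y * ((μ + (n:ℝ)^2 / (lamt y)^2) * ξ₂ y))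
        (Set.Ioc 0 b0) y)
    (hξ₁mono : MonotoneOn ξ₁ (Set.Ioc 0 b0))
    (hξ₁lim : Tendsto ξ₁ (𝓝[>] (0:ℝ)) (𝓝 0))
    (hξ₂anti : AntitoneOn ξ₂ (Set.Ioc 0 b0))
    (hξ₂b0 : ξ₂ b0 = 0)
    (hDξ₁mono : MonotoneOn Dξ₁ (Set.Ioc 0 b0))
    (hDξ₂mono : MonotoneOn Dξ₂ (Set.Ioc 0 b0))
    (hDξ₁lim : Tendsto Dξ₁ (𝓝[>] (0:ℝ)) (𝓝 0))
    (hDξ₂b0 : Dξ₂ b0 < 0)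
    (W : ℝ) (hW : 0 < W)
    (hWr : ∀ y ∈ Set.Ioc (0:ℝ) b0, Dξ₁ y * ξ₂ y - Dξ₂ y * ξ₁ y = W)
    (gt : ℝ → ℝ)
    (hgt : ∀ y : ℝ, gt y = (1 / W) *
      (ξ₂ y * (∫ z in (0:ℝ)..y, ξ₁ z * G z * (2 * lamt z)) +
       ξ₁ y * (∫ z in y..b0, ξ₂ z * G z * (2 * lamt z))))
    (Dgt : ℝ → ℝ)
    (hDgt : ∀ y : ℝ, Dgt y = (1 / W) *
      (Dξ₁ y * (∫ z in y..b0, ξ₂ z * G z * (2 * lamt z)) +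
       Dξ₂ y * (∫ z in (0:ℝ)..y, ξ₁ z * G z * (2 * lamt z)))) :
    (∀ y ∈ Set.Ioo (0:ℝ) b0, HasDerivAt gt (lamt y * Dgt y) y) ∧
    Tendsto Dgt (𝓝[>] (0:ℝ)) (𝓝 0) :=
  Dgt_formula_and_limit_general b0 hb0 lamt hlamt_cont hlamt_lim G hG ξ₁ ξ₂ Dξ₁ Dξ₂ hξ₁nn hξ₂nn hξ₁d
    hξ₂d hξ₁lim hDξ₁mono hDξ₂mono hDξ₁lim hDξ₂b0 W hWr gt hgt Dgt hDgt
end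

section
/- Let a < 0 < b₀, let ũ : [a, b₀] → ℝ be continuous and strictly increasing with ũ(0) = 0, and let f : ℝ × [a, b₀] → ℝ be continuous, 2π-periodic in its first variable, with f(θ, 0) = f(0, 0) for all θ, and attaining its maximum over ℝ × [a, b₀] at the points (θ, 0). Suppose that for each θ the one-sided limits D⁺(θ) = lim_{y→0⁺} (f(θ, y) − f(θ, 0))/ũ(y) and D⁻(θ) = lim_{y→0⁻} (f(θ, y) − f(θ, 0))/ũ(y) exist, are finite, depend continuously on θ, and satisfy the gluing condition ∫₀^{2π} D⁻(θ) dθ = ∫₀^{2π} D⁺(θ) dθ. Then D⁺(θ) = D⁻(θ) = 0 for all θ. -/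
open Filter Topology intervalIntegral Real

/-!
Every point of the glued circle is a maximum of `f θ`, so the numerator `f θ y - f θ 0` is
nonpositive while `ũ y` has the sign of `y`; hence `D⁺ ≤ 0 ≤ D⁻`. The gluing condition then
forces `∫ D⁺ = ∫ D⁻ = 0`, and a continuous periodic function of constant sign with vanishing
integral over a period is identically zero.
-/

section StrictMonoOn

variable {α β : Type*} [TopologicalSpace α] [Preorder α] [Preorder β] {u : α → β} {s : Set α}
  {x : α}

theorem StrictMonoOn.eventually_lt_nhdsGT
    (hu : StrictMonoOn u s) (hs : s ∈ 𝓝 x) : ∀ᶠ y in 𝓝[>] x, u x < u y := by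
  filter_upwards [nhdsWithin_le_nhds hs, self_mem_nhdsWithin] with y hys hxy
  exact hu (mem_of_mem_nhds hs) hys hxy

theorem StrictMonoOn.eventually_gt_nhdsLT
    (hu : StrictMonoOn u s) (hs : s ∈ 𝓝 x) : ∀ᶠ y in 𝓝[<] x, u y < u x := by
  filter_upwards [nhdsWithin_le_nhds hs, self_mem_nhdsWithin] with y hys hyx
  exact hu hys (mem_of_mem_nhds hs) hyx

end StrictMonoOn

namespace IsLocalMax

variable {h u : ℝ → ℝ} {x L : ℝ}

theorem nonpos_of_tendsto_div_nhdsGT (hmax : IsLocalMax h x) (hu : ∀ᶠ y in 𝓝[>] x, 0 < u y)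
    (hL : Tendsto (fun y => (h y - h x) / u y) (𝓝[>] x) (𝓝 L)) : L ≤ 0 := by
  refine le_of_tendsto hL ?_
  filter_upwards [nhdsWithin_le_nhds hmax, hu] with y hy huy
  exact div_nonpos_of_nonpos_of_nonneg (sub_nonpos.2 hy) huy.le

theorem nonneg_of_tendsto_div_nhdsLT (hmax : IsLocalMax h x) (hu : ∀ᶠ y in 𝓝[<] x, u y < 0)
    (hL : Tendsto (fun y => (h y - h x) / u y) (𝓝[<] x) (𝓝 L)) : 0 ≤ L := by
  refine ge_of_tendsto hL ?_
  filter_upwards [nhdsWithin_le_nhds hmax, hu] with y hy huy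
  exact div_nonneg_of_nonpos (sub_nonpos.2 hy) huy.le

end IsLocalMax

theorem Function.Periodic.of_tendsto {α β : Type*} [TopologicalSpace β] [T2Space β]
    {l : Filter α} [l.NeBot] {F : ℝ → α → β} {D : ℝ → β} {T : ℝ}
    (hF : Function.Periodic F T) (hD : ∀ θ, Tendsto (F θ) l (𝓝 (D θ))) :
    Function.Periodic D T := fun θ =>
  tendsto_nhds_unique (hF θ ▸ hD (θ + T)) (hD θ)

theorem Function.Periodic.eq_zero_of_nonneg_of_intervalIntegral_eq_zero {g : ℝ → ℝ} {T : ℝ}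
    (hT : 0 < T) (hg : Function.Periodic g T) (hgc : Continuous g) (hg0 : 0 ≤ g)
    (hI : ∫ x in (0:ℝ)..T, g x = 0) : g = 0 := by
  funext θ
  by_contra hθ
  have hpos : 0 < ∫ x in θ..θ + T, g x :=
    integral_pos (by linarith) hgc.continuousOn (fun x _ => hg0 x)
      ⟨θ, ⟨le_rfl, by linarith⟩, lt_of_le_of_ne (hg0 θ) (Ne.symm hθ)⟩
  rw [hg.intervalIntegral_add_eq θ 0, zero_add, hI] at hpos
  exact lt_irrefl 0 hpos

theorem cylinder_glued_point_max_principle_general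
    (a b0 : ℝ) (ha : a < 0) (hb : 0 < b0)
    (util : ℝ → ℝ)
    (hmono : StrictMonoOn util (Set.Icc a b0))
    (hutil0 : util 0 = 0)
    (f : ℝ → ℝ → ℝ)
    (hper : ∀ θ y : ℝ, f (θ + 2 * π) y = f θ y)
    (hglue : ∀ θ : ℝ, f θ 0 = f 0 0)
    (hmax : ∀ θ : ℝ, ∀ y ∈ Set.Icc a b0, f θ y ≤ f 0 0)
    (Dp Dm : ℝ → ℝ)
    (hDp : ∀ θ : ℝ, Tendsto (fun y => (f θ y - f θ 0) / util y)
      (𝓝[>] (0:ℝ)) (𝓝 (Dp θ)))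
    (hDm : ∀ θ : ℝ, Tendsto (fun y => (f θ y - f θ 0) / util y)
      (𝓝[<] (0:ℝ)) (𝓝 (Dm θ)))
    (hDpc : Continuous Dp) (hDmc : Continuous Dm)
    (hgluing : (∫ θ in (0:ℝ)..(2 * π), Dm θ) = ∫ θ in (0:ℝ)..(2 * π), Dp θ) :
    ∀ θ : ℝ, Dp θ = 0 ∧ Dm θ = 0 := by
  have hIcc : Set.Icc a b0 ∈ 𝓝 (0:ℝ) := Icc_mem_nhds ha hb
  have hlocmax (θ : ℝ) : IsLocalMax (f θ) 0 := by
    filter_upwards [hIcc] with y hy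
    exact hglue θ ▸ hmax θ y hy
  have hDp_nonpos (θ : ℝ) : Dp θ ≤ 0 :=
    (hlocmax θ).nonpos_of_tendsto_div_nhdsGT
      (by simpa only [hutil0] using hmono.eventually_lt_nhdsGT hIcc) (hDp θ)
  have hDm_nonneg (θ : ℝ) : 0 ≤ Dm θ :=
    (hlocmax θ).nonneg_of_tendsto_div_nhdsLT
      (by simpa only [hutil0] using hmono.eventually_gt_nhdsLT hIcc) (hDm θ)
  have hquot_per : Function.Periodic (fun θ y => (f θ y - f θ 0) / util y) (2 * π) :=
    fun θ => by simp only [hper]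
  have hDp_per : Function.Periodic Dp (2 * π) := hquot_per.of_tendsto hDp
  have hDm_per : Function.Periodic Dm (2 * π) := hquot_per.of_tendsto hDm
  have h2π : (0:ℝ) < 2 * π := by positivity
  have hIp : ∫ θ in (0:ℝ)..(2 * π), Dp θ = 0 := by
    refine le_antisymm ?_ (hgluing ▸ integral_nonneg h2π.le fun θ _ => hDm_nonneg θ)
    simpa using integral_nonneg h2π.le fun θ _ => neg_nonneg.2 (hDp_nonpos θ)
  have hDp0 : -Dp = 0 :=
    (hDp_per.comp Neg.neg).eq_zero_of_nonneg_of_intervalIntegral_eq_zero h2π hDpc.neg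
      (fun θ => neg_nonneg.2 (hDp_nonpos θ)) (by simp [integral_neg, hIp])
  have hDm0 : Dm = 0 :=
    hDm_per.eq_zero_of_nonneg_of_intervalIntegral_eq_zero h2π hDmc hDm_nonneg (hgluing.trans hIp)
  exact fun θ => ⟨neg_eq_zero.1 (congrFun hDp0 θ), congrFun hDm0 θ⟩

/-- maximum principle at the glued point of the cylinder. If f (2π-periodic
in θ, constant on the glued circle y = 0) attains its maximum at the points (θ, 0), the
one-sided generalized derivatives D±(θ) with respect to ũ exist, are finite, depend
continuously on θ, and satisfy the gluing condition ∫₀^{2π} D⁻ = ∫₀^{2π} D⁺, then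
D⁺ ≡ D⁻ ≡ 0. -/
theorem cylinder_glued_point_max_principle
    (a b0 : ℝ) (ha : a < 0) (hb : 0 < b0)
    (util : ℝ → ℝ)
    (hcont : ContinuousOn util (Set.Icc a b0))
    (hmono : StrictMonoOn util (Set.Icc a b0))
    (hutil0 : util 0 = 0)
    (f : ℝ → ℝ → ℝ)
    (hfc : ContinuousOn (fun p : ℝ × ℝ => f p.1 p.2) (Set.univ ×ˢ Set.Icc a b0))
    (hper : ∀ θ y : ℝ, f (θ + 2 * π) y = f θ y)
    (hglue : ∀ θ : ℝ, f θ 0 = f 0 0)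
    (hmax : ∀ θ : ℝ, ∀ y ∈ Set.Icc a b0, f θ y ≤ f 0 0)
    (Dp Dm : ℝ → ℝ)
    (hDp : ∀ θ : ℝ, Tendsto (fun y => (f θ y - f θ 0) / util y)
      (𝓝[>] (0:ℝ)) (𝓝 (Dp θ)))
    (hDm : ∀ θ : ℝ, Tendsto (fun y => (f θ y - f θ 0) / util y)
      (𝓝[<] (0:ℝ)) (𝓝 (Dm θ)))
    (hDpc : Continuous Dp) (hDmc : Continuous Dm)
    (hgluing : (∫ θ in (0:ℝ)..(2 * π), Dm θ) = ∫ θ in (0:ℝ)..(2 * π), Dp θ) :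
    ∀ θ : ℝ, Dp θ = 0 ∧ Dm θ = 0 :=
  cylinder_glued_point_max_principle_general a b0 ha hb util hmono hutil0 f hper hglue hmax Dp Dm
    hDp hDm hDpc hDmc hgluing
end

section
/- For every μ > 0 and every continuous F : [a, b₀] → ℝ there exists a continuous function f : [a, b₀] → ℝ, twice continuously differentiable on [a, 0) ∪ (0, b₀], such that: (i) μ·f(q) − (1/ṽ′(q))·(d/dq)(f′(q)/ũ′(q)) = F(q) for all q ∈ [a, b₀] with q ≠ 0; (ii) the one-sided limits lim_{δ→0⁺} (f(δ) − f(0))/ũ(δ) and lim_{δ→0⁺} (f(0) − f(−δ))/(−ũ(−δ)) exist, are finite and equal; and (iii) μ·f(a) = F(a) and μ·f(b₀) = F(b₀). -/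
/-!
Put `p = ũ'` and `r = ṽ'`. Since `λ` vanishes on `[-1, 1]`, both are continuous across `0`, and
they are positive away from `0`. With `g = f' / p` the equation `μ f - D_ṽ D_ũ f = F` becomes the
linear first-order system `f' = p g`, `g' = r (μ f - F)`, which has solutions on a neighbourhood
of `[a, b₀]` for arbitrary initial data at `a` (Picard iteration; the coefficients are bounded
there). A solution with `f a = F a / μ` is corrected by a multiple of the homogeneous solution
with `f a = 0`, `g a = 1`. For the latter `(f g)' = p g² + μ r f² ≥ 0` and
`(g²)' = 2 μ r f g ≥ 0`, so `g ≥ 1` and hence `f b₀ > 0`; this fixes the multiple that gives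
`μ f b₀ = F b₀`. Both one-sided quotients at `0` tend to `g 0` by L'Hôpital's rule, since
`(f - f 0)' / ũ' = g` away from `0`.
-/

open Filter Topology intervalIntegral MeasureTheory Set Function
open scoped NNReal Nat

/- Mathlib's `IsPicardLindelof` only yields solutions on time intervals limited by the size of a
ball on which the vector field is bounded. For a vector field that is Lipschitz uniformly in time,
some iterate of the Picard map is a contraction on curves over the whole interval. -/
section GlobalPicard

variable {E : Type*} [NormedAddCommGroup E] {V : ℝ → E → E} {K : ℝ≥0} {A B : ℝ}

lemma continuous_uncurry_comp_IccExtend (hAB : A ≤ B) (hV : Continuous (uncurry V))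
    (α : C(Icc A B, E)) : Continuous fun s => V s (IccExtend hAB α s) :=
  hV.comp (continuous_id.prodMk (α.continuous.comp continuous_projIcc))

variable [NormedSpace ℝ E]

noncomputable def picardIcc (hAB : A ≤ B) (hV : Continuous (uncurry V)) (t₀ : ℝ) (x₀ : E)
    (α : C(Icc A B, E)) : C(Icc A B, E) where
  toFun t := x₀ + ∫ s in t₀..t, V s (IccExtend hAB α s)
  continuous_toFun := continuous_const.add ((continuous_primitive (fun _ _ =>
    (continuous_uncurry_comp_IccExtend hAB hV α).intervalIntegrable _ _) t₀).comp
      continuous_subtype_val)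

lemma dist_picardIcc_iterate_apply_le {t₀ : ℝ} (hAB : A ≤ B) (hV : Continuous (uncurry V))
    (hlip : ∀ t ∈ Icc A B, LipschitzWith K (V t)) (ht₀ : t₀ ∈ Icc A B) (x₀ : E)
    (α β : C(Icc A B, E)) (n : ℕ) (t : Icc A B) :
    dist ((picardIcc hAB hV t₀ x₀)^[n] α t) ((picardIcc hAB hV t₀ x₀)^[n] β t) ≤
      (K * |t - t₀|) ^ n / n ! * dist α β := by
  induction n generalizing t with
  | zero => simpa using ContinuousMap.dist_apply_le_dist (f := α) (g := β) t
  | succ n ih =>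
    set Φ := picardIcc hAB hV t₀ x₀
    have hint γ := continuous_uncurry_comp_IccExtend hAB hV γ
    rw [iterate_succ_apply', iterate_succ_apply', dist_eq_norm]
    change ‖(x₀ + _) - (x₀ + _)‖ ≤ _
    rw [add_sub_add_left_eq_sub, ← integral_sub ((hint _).intervalIntegrable _ _)
      ((hint _).intervalIntegrable _ _)]
    calc
      _ ≤ ∫ τ in uIoc t₀ t, K ^ (n + 1) * |τ - t₀| ^ n / n ! * dist α β := by
        rw [norm_intervalIntegral_eq]
        apply MeasureTheory.norm_integral_le_of_norm_le (Continuous.integrableOn_uIoc (by fun_prop))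
        refine ae_restrict_of_forall_mem measurableSet_uIoc fun τ hτ => ?_
        have hτ' : τ ∈ Icc A B := uIcc_subset_Icc ht₀ t.2 (uIoc_subset_uIcc hτ)
        rw [← dist_eq_norm, IccExtend_of_mem _ _ hτ', IccExtend_of_mem _ _ hτ']
        calc _ ≤ K * dist (Φ^[n] α ⟨τ, hτ'⟩) (Φ^[n] β ⟨τ, hτ'⟩) := (hlip τ hτ').dist_le_mul _ _
          _ ≤ K * ((K * |τ - t₀|) ^ n / n ! * dist α β) := by gcongr; exact ih ⟨τ, hτ'⟩
          _ = _ := by ring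
      _ = (K * |t - t₀|) ^ (n + 1) / (n + 1) ! * dist α β := by
        rw [MeasureTheory.integral_mul_const, MeasureTheory.integral_div,
          MeasureTheory.integral_const_mul, integral_pow_abs_sub_uIoc, Nat.factorial_succ]
        push_cast
        field_simp
        ring

lemma exists_isFixedPt_picardIcc [CompleteSpace E] {t₀ : ℝ} (hAB : A ≤ B)
    (hV : Continuous (uncurry V)) (hlip : ∀ t ∈ Icc A B, LipschitzWith K (V t))
    (ht₀ : t₀ ∈ Icc A B) (x₀ : E) : ∃ α, IsFixedPt (picardIcc hAB hV t₀ x₀) α := by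
  obtain ⟨n, hn⟩ := (FloorSemiring.tendsto_pow_div_factorial_atTop (K * (B - A))).eventually
    (gt_mem_nhds zero_lt_one) |>.exists
  have hBA : 0 ≤ B - A := sub_nonneg.2 hAB
  have hC : (0 : ℝ) ≤ (K * (B - A)) ^ n / n ! := by positivity
  have hcontr : ContractingWith ⟨_, hC⟩ (picardIcc hAB hV t₀ x₀)^[n] := by
    refine ⟨hn, LipschitzWith.of_dist_le_mul fun α β => ?_⟩
    change _ ≤ (K * (B - A)) ^ n / n ! * dist α β
    refine (ContinuousMap.dist_le (by positivity)).2 fun t => ?_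
    refine (dist_picardIcc_iterate_apply_le hAB hV hlip ht₀ x₀ α β n t).trans ?_
    have : |(t : ℝ) - t₀| ≤ B - A :=
      abs_sub_le_iff.2 ⟨by linarith [t.2.2, ht₀.1], by linarith [t.2.1, ht₀.2]⟩
    gcongr
  exact ⟨_, hcontr.isFixedPt_fixedPoint_iterate⟩

theorem exists_forall_hasDerivAt_Ioo_of_lipschitzWith [CompleteSpace E] {t₀ : ℝ}
    (hV : Continuous (uncurry V)) (hlip : ∀ t ∈ Icc A B, LipschitzWith K (V t))
    (ht₀ : t₀ ∈ Icc A B) (x₀ : E) :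
    ∃ x : ℝ → E, x t₀ = x₀ ∧ ∀ t ∈ Ioo A B, HasDerivAt x (V t (x t)) t := by
  have hAB : A ≤ B := ht₀.1.trans ht₀.2
  obtain ⟨α, hα⟩ := exists_isFixedPt_picardIcc hAB hV hlip ht₀ x₀
  have hint := continuous_uncurry_comp_IccExtend hAB hV α
  have hfix : ∀ t ∈ Icc A B, IccExtend hAB α t = x₀ + ∫ s in t₀..t, V s (IccExtend hAB α s) :=
    fun t ht => by
      rw [IccExtend_of_mem _ _ ht]
      exact (DFunLike.congr_fun hα _).symm
  refine ⟨IccExtend hAB α, by simp [hfix t₀ ht₀], fun t ht => ?_⟩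
  refine ((hint.integral_hasStrictDerivAt t₀ t).hasDerivAt.const_add x₀).congr_of_eventuallyEq ?_
  filter_upwards [Ioo_mem_nhds ht.1 ht.2] with s hs using hfix s (Ioo_subset_Icc_self hs)

theorem exists_forall_hasDerivAt_Ioo_of_linear [CompleteSpace E] {t₀ : ℝ} {M : ℝ → E →L[ℝ] E}
    {b : ℝ → E} (hM : Continuous M) (hb : Continuous b) (ht₀ : t₀ ∈ Icc A B) (x₀ : E) :
    ∃ x : ℝ → E, x t₀ = x₀ ∧ ∀ t ∈ Ioo A B, HasDerivAt x (M t (x t) + b t) t := by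
  obtain ⟨C, hC⟩ := isCompact_Icc.exists_bound_of_continuousOn hM.continuousOn (s := Icc A B)
  have hlip : ∀ t ∈ Icc A B, LipschitzWith C.toNNReal fun x => M t x + b t := fun t ht =>
    LipschitzWith.of_dist_le_mul fun x y => by
      rw [dist_add_right, dist_eq_norm, dist_eq_norm, ← map_sub]
      exact (M t).le_of_opNorm_le ((hC t ht).trans (Real.le_coe_toNNReal C)) _
  exact exists_forall_hasDerivAt_Ioo_of_lipschitzWith (V := fun t x => M t x + b t)
    (by fun_prop) hlip ht₀ x₀

end GlobalPicard

lemma monotoneOn_Icc_of_hasDerivAt {w w' : ℝ → ℝ} {a b : ℝ}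
    (hw : ∀ t ∈ Icc a b, HasDerivAt w (w' t) t) (hw' : ∀ t ∈ Ioo a b, 0 ≤ w' t) :
    MonotoneOn w (Icc a b) :=
  monotoneOn_of_hasDerivWithinAt_nonneg (convex_Icc a b)
    (fun t ht => (hw t ht).continuousAt.continuousWithinAt)
    (fun t ht => (hw t (interior_subset ht)).hasDerivWithinAt) (by rwa [interior_Icc])

lemma strictMonoOn_Icc_of_hasDerivAt {w w' : ℝ → ℝ} {a b : ℝ}
    (hw : ∀ t ∈ Icc a b, HasDerivAt w (w' t) t) (hw' : ∀ t ∈ Ioo a b, 0 < w' t) :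
    StrictMonoOn w (Icc a b) :=
  strictMonoOn_of_hasDerivWithinAt_pos (convex_Icc a b)
    (fun t ht => (hw t ht).continuousAt.continuousWithinAt)
    (fun t ht => (hw t (interior_subset ht)).hasDerivWithinAt) (by rwa [interior_Icc])

lemma Continuous.nonneg_of_pos_of_ne {p : ℝ → ℝ} {c : ℝ} (hp : Continuous p)
    (hpos : ∀ y ≠ c, 0 < p y) (y : ℝ) : 0 ≤ p y := by
  rcases eq_or_ne y c with rfl | hy
  · exact ge_of_tendsto (x := 𝓝[{y}ᶜ] y) (hp.continuousAt.tendsto.mono_left nhdsWithin_le_nhds)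
      (eventually_nhdsWithin_of_forall fun z hz => (hpos z hz).le)
  · exact (hpos y hy).le

/-- First-order form of `μ f - (g' / r) = G` with `g = f' / p`. -/
def IsResolventPairOn (p r : ℝ → ℝ) (μ : ℝ) (G : ℝ → ℝ) (s : Set ℝ) (f g : ℝ → ℝ) : Prop :=
  ∀ t ∈ s, HasDerivAt f (p t * g t) t ∧ HasDerivAt g (r t * (μ * f t - G t)) t

section ResolventPair

variable {p r G f g f₀ g₀ f₁ g₁ : ℝ → ℝ} {μ : ℝ} {s : Set ℝ} {a b c : ℝ}

lemma IsResolventPairOn.mono {s' : Set ℝ} (h : IsResolventPairOn p r μ G s f g) (hs : s' ⊆ s) :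
    IsResolventPairOn p r μ G s' f g :=
  fun t ht => h t (hs ht)

lemma IsResolventPairOn.add_mul (h₀ : IsResolventPairOn p r μ G s f₀ g₀)
    (h₁ : IsResolventPairOn p r μ 0 s f₁ g₁) (c : ℝ) :
    IsResolventPairOn p r μ G s (fun t => f₀ t + c * f₁ t) (fun t => g₀ t + c * g₁ t) := by
  intro t ht
  obtain ⟨hf₀, hg₀⟩ := h₀ t ht
  obtain ⟨hf₁, hg₁⟩ := h₁ t ht
  exact ⟨(hf₀.add (hf₁.const_mul c)).congr_deriv (by ring),
    (hg₀.add (hg₁.const_mul c)).congr_deriv (by simp only [Pi.zero_apply]; ring)⟩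

lemma exists_isResolventPairOn {A B t₀ : ℝ} (hp : Continuous p) (hr : Continuous r)
    (hG : Continuous G) (ht₀ : t₀ ∈ Icc A B) (α β : ℝ) :
    ∃ f g, f t₀ = α ∧ g t₀ = β ∧ IsResolventPairOn p r μ G (Ioo A B) f g := by
  let M : ℝ → ℝ × ℝ →L[ℝ] ℝ × ℝ := fun t =>
    p t • (ContinuousLinearMap.inl ℝ ℝ ℝ).comp (ContinuousLinearMap.snd ℝ ℝ ℝ) +
      (μ * r t) • (ContinuousLinearMap.inr ℝ ℝ ℝ).comp (ContinuousLinearMap.fst ℝ ℝ ℝ)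
  obtain ⟨x, hx₀, hx⟩ := exists_forall_hasDerivAt_Ioo_of_linear (M := M)
    (b := fun t => (0, -(r t * G t))) (by fun_prop) (by fun_prop) ht₀ (α, β)
  refine ⟨fun t => (x t).1, fun t => (x t).2, by simp [hx₀], by simp [hx₀], fun t ht => ?_⟩
  have hfst := (ContinuousLinearMap.fst ℝ ℝ ℝ).hasFDerivAt.comp_hasDerivAt t (hx t ht)
  have hsnd := (ContinuousLinearMap.snd ℝ ℝ ℝ).hasFDerivAt.comp_hasDerivAt t (hx t ht)
  exact ⟨hfst.congr_deriv (by simp [M]), hsnd.congr_deriv (by simp [M]; ring)⟩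

lemma IsResolventPairOn.one_le_of_homogeneous (h : IsResolventPairOn p r μ 0 s f g)
    (hs : Icc a b ⊆ s) (hp : ∀ t, 0 ≤ p t) (hr : ∀ t, 0 ≤ r t) (hμ : 0 ≤ μ)
    (hfa : f a = 0) (hga : g a = 1) : ∀ t ∈ Icc a b, 1 ≤ g t := by
  have hf t (ht : t ∈ Icc a b) := (h t (hs ht)).1
  have hg t (ht : t ∈ Icc a b) : HasDerivAt g (μ * r t * f t) t :=
    (h t (hs ht)).2.congr_deriv (by simp only [Pi.zero_apply]; ring)
  have hfg : ∀ t ∈ Icc a b, 0 ≤ f t * g t := by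
    have := monotoneOn_Icc_of_hasDerivAt (fun t ht => (hf t ht).mul (hg t ht)) fun t ht => by
      nlinarith [mul_nonneg (hp t) (sq_nonneg (g t)),
        mul_nonneg (mul_nonneg hμ (hr t)) (sq_nonneg (f t))]
    intro t ht
    simpa [hfa] using this (left_mem_Icc.2 (ht.1.trans ht.2)) ht ht.1
  have hg2 : ∀ t ∈ Icc a b, 1 ≤ g t ^ 2 := by
    have := monotoneOn_Icc_of_hasDerivAt (fun t ht => (hg t ht).pow 2) fun t ht => by
      have := mul_nonneg (mul_nonneg hμ (hr t)) (hfg t (Ioo_subset_Icc_self ht))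
      rw [Nat.cast_ofNat, Nat.add_one_sub_one, pow_one]
      nlinarith
    intro t ht
    simpa [hga] using this (left_mem_Icc.2 (ht.1.trans ht.2)) ht ht.1
  intro t ht
  by_contra hlt
  obtain ⟨τ, hτ, hgτ⟩ : ∃ τ ∈ Icc a t, g τ = 0 :=
    intermediate_value_Icc' ht.1
      (fun τ hτ => (hg τ ⟨hτ.1, hτ.2.trans ht.2⟩).continuousAt.continuousWithinAt)
      ⟨by nlinarith [hg2 t ht], by rw [hga]; exact zero_le_one⟩
  have := hg2 τ ⟨hτ.1, hτ.2.trans ht.2⟩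
  norm_num [hgτ] at this

lemma IsResolventPairOn.pos_of_homogeneous (h : IsResolventPairOn p r μ 0 s f g)
    (hs : Icc a b ⊆ s) (hp : ∀ t, 0 ≤ p t) (hr : ∀ t, 0 ≤ r t) (hμ : 0 ≤ μ)
    (hfa : f a = 0) (hga : g a = 1) (hac : a ≤ c) (hcb : c < b)
    (hpos : ∀ t ∈ Ioo c b, 0 < p t) : 0 < f b := by
  have hg := h.one_le_of_homogeneous hs hp hr hμ hfa hga
  have hf t (ht : t ∈ Icc a b) := (h t (hs ht)).1
  have hmono : MonotoneOn f (Icc a b) :=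
    monotoneOn_Icc_of_hasDerivAt hf fun t ht =>
      mul_nonneg (hp t) (zero_le_one.trans (hg t (Ioo_subset_Icc_self ht)))
  have hstrict : StrictMonoOn f (Icc c b) :=
    strictMonoOn_Icc_of_hasDerivAt (fun t ht => hf t ⟨hac.trans ht.1, ht.2⟩) fun t ht =>
      mul_pos (hpos t ht) (zero_lt_one.trans_le (hg t ⟨hac.trans ht.1.le, ht.2.le⟩))
  calc 0 = f a := hfa.symm
    _ ≤ f c := hmono (left_mem_Icc.2 (hac.trans hcb.le)) ⟨hac, hcb.le⟩ hac
    _ < f b := hstrict (left_mem_Icc.2 hcb.le) (right_mem_Icc.2 hcb.le) hcb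

lemma exists_isResolventPairOn_boundary_values {A B : ℝ} (hp : Continuous p)
    (hr : Continuous r) (hG : Continuous G) (hp0 : ∀ t, 0 ≤ p t) (hr0 : ∀ t, 0 ≤ r t)
    (hμ : 0 ≤ μ) (hab : Icc a b ⊆ Ioo A B) (hac : a ≤ c) (hcb : c < b)
    (hpos : ∀ t ∈ Ioo c b, 0 < p t) (α β : ℝ) :
    ∃ f g, IsResolventPairOn p r μ G (Ioo A B) f g ∧ f a = α ∧ f b = β := by
  have ha : a ∈ Icc A B := Ioo_subset_Icc_self (hab (left_mem_Icc.2 (hac.trans hcb.le)))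
  obtain ⟨f₀, g₀, hf₀a, -, h₀⟩ := exists_isResolventPairOn (μ := μ) hp hr hG ha α 0
  obtain ⟨f₁, g₁, hf₁a, hg₁a, h₁⟩ := exists_isResolventPairOn (μ := μ) hp hr
    continuous_const ha 0 1
  have hf₁b := h₁.pos_of_homogeneous hab hp0 hr0 hμ hf₁a hg₁a hac hcb hpos
  refine ⟨_, _, h₀.add_mul h₁ ((β - f₀ b) / f₁ b), by simp [hf₀a, hf₁a], ?_⟩
  field_simp
  ring

lemma IsResolventPairOn.contDiffOn (h : IsResolventPairOn p r μ G s f g) (hs : IsOpen s)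
    (hp : ContDiffOn ℝ 1 p s) (hr : ContinuousOn r s) (hG : ContinuousOn G s) :
    ContDiffOn ℝ 2 f s := by
  have hf : ContinuousOn f s := fun t ht => (h t ht).1.continuousAt.continuousWithinAt
  have hg : ContDiffOn ℝ 1 g s := by
    rw [show (1 : WithTop ℕ∞) = 0 + 1 from rfl, contDiffOn_succ_iff_deriv_of_isOpen hs]
    refine ⟨fun t ht => (h t ht).2.differentiableAt.differentiableWithinAt, by simp, ?_⟩
    exact contDiffOn_zero.2 <| (hr.mul ((continuousOn_const.mul hf).sub hG)).congr
      fun t ht => (h t ht).2.deriv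
  rw [show (2 : WithTop ℕ∞) = 1 + 1 from rfl, contDiffOn_succ_iff_deriv_of_isOpen hs]
  exact ⟨fun t ht => (h t ht).1.differentiableAt.differentiableWithinAt, by simp,
    (hp.mul hg).congr fun t ht => (h t ht).1.deriv⟩

lemma IsResolventPairOn.deriv_div_eventuallyEq {u : ℝ → ℝ} {t : ℝ}
    (h : IsResolventPairOn p r μ G s f g) (hs : IsOpen s)
    (hu : ∀ x ∈ s, HasDerivAt u (p x) x) (hp : ∀ x ∈ s, p x ≠ 0) (ht : t ∈ s) :
    (fun x => deriv f x / deriv u x) =ᶠ[𝓝 t] g := by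
  filter_upwards [hs.mem_nhds ht] with x hx
  rw [(h x hx).1.deriv, (hu x hx).deriv, mul_div_cancel_left₀ _ (hp x hx)]

end ResolventPair

lemma ContDiffOn.second_deriv_regularity {f : ℝ → ℝ} {U S : Set ℝ} (hf : ContDiffOn ℝ 2 f U)
    (hU : IsOpen U) (hS : S ⊆ U) :
    (∀ q ∈ S, DifferentiableAt ℝ f q) ∧ ContinuousOn (deriv f) S ∧
      (∀ q ∈ S, DifferentiableAt ℝ (deriv f) q) ∧ ContinuousOn (deriv (deriv f)) S := by
  have hf' : ContDiffOn ℝ 1 (deriv f) U := hf.deriv_of_isOpen hU le_rfl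
  exact ⟨fun q hq => (hf.differentiableOn (by norm_num) q (hS hq)).differentiableAt
      (hU.mem_nhds (hS hq)),
    (hf.continuousOn_deriv_of_isOpen hU (by norm_num)).mono hS,
    fun q hq => (hf'.differentiableOn one_ne_zero q (hS hq)).differentiableAt
      (hU.mem_nhds (hS hq)),
    (hf'.continuousOn_deriv_of_isOpen hU le_rfl).mono hS⟩

lemma tendsto_sub_div_nhdsNE_of_hasDerivAt {f g u p : ℝ → ℝ} {a : ℝ}
    (hf : ∀ᶠ x in 𝓝[≠] a, HasDerivAt f (p x * g x) x) (hu : ∀ᶠ x in 𝓝[≠] a, HasDerivAt u (p x) x)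
    (hp : ∀ᶠ x in 𝓝[≠] a, p x ≠ 0) (hfa : ContinuousAt f a) (hga : ContinuousAt g a)
    (hu0 : Tendsto u (𝓝[≠] a) (𝓝 0)) :
    Tendsto (fun x => (f x - f a) / u x) (𝓝[≠] a) (𝓝 (g a)) := by
  refine HasDerivAt.lhopital_zero_nhdsNE (hf.mono fun x hx => hx.sub_const (f a)) hu hp ?_ hu0 ?_
  · have : Tendsto (fun x => f x - f a) (𝓝 a) (𝓝 (f a - f a)) := hfa.tendsto.sub_const (f a)
    exact (sub_self (f a) ▸ this).mono_left nhdsWithin_le_nhds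
  · refine (hga.tendsto.mono_left nhdsWithin_le_nhds).congr' ?_
    filter_upwards [hp] with x hx
    rw [mul_div_cancel_left₀ _ hx]

lemma tendsto_one_sided_of_tendsto_nhdsNE {f u : ℝ → ℝ} {L : ℝ}
    (h : Tendsto (fun x => (f x - f 0) / u x) (𝓝[≠] 0) (𝓝 L)) :
    Tendsto (fun δ => (f δ - f 0) / u δ) (𝓝[>] 0) (𝓝 L) ∧
      Tendsto (fun δ => (f 0 - f (-δ)) / (-u (-δ))) (𝓝[>] 0) (𝓝 L) := by
  have hneg : Tendsto (fun δ : ℝ => -δ) (𝓝[>] 0) (𝓝[≠] 0) := by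
    simpa using (tendsto_neg_nhdsGT_neg (a := (0 : ℝ))).mono_right (nhdsLT_le_nhdsNE 0)
  refine ⟨h.mono_left (nhdsGT_le_nhdsNE 0), (h.comp hneg).congr fun δ => ?_⟩
  simp only [comp_apply, ← neg_div_neg_eq (f (-δ) - f 0), neg_sub]

theorem exists_resolvent_solution {p r util vtil F : ℝ → ℝ} {a b μ : ℝ}
    (hp : Continuous p) (hr : Continuous r) (hp_pos : ∀ y ≠ 0, 0 < p y)
    (hr_pos : ∀ y ≠ 0, 0 < r y) (hp1 : ContDiffOn ℝ 1 p {0}ᶜ)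
    (hutil : ∀ y ≠ 0, HasDerivAt util (p y) y) (hvtil : ∀ y ≠ 0, HasDerivAt vtil (r y) y)
    (hutil0 : Tendsto util (𝓝[≠] 0) (𝓝 0)) (ha : a < 0) (hb : 0 < b) (hμ : 0 < μ)
    (hF : ContinuousOn F (Icc a b)) :
    ∃ f : ℝ → ℝ,
      ContinuousOn f (Icc a b) ∧
      (∀ q ∈ Icc a b \ {0}, DifferentiableAt ℝ f q) ∧
      ContinuousOn (deriv f) (Icc a b \ {0}) ∧
      (∀ q ∈ Icc a b \ {0}, DifferentiableAt ℝ (deriv f) q) ∧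
      ContinuousOn (deriv (deriv f)) (Icc a b \ {0}) ∧
      (∀ q ∈ Icc a b \ {0}, DifferentiableAt ℝ (fun x => deriv f x / deriv util x) q) ∧
      (∀ q ∈ Icc a b \ {0},
        μ * f q - deriv (fun x => deriv f x / deriv util x) q / deriv vtil q = F q) ∧
      (∃ L : ℝ,
        Tendsto (fun δ : ℝ => (f δ - f 0) / util δ) (𝓝[>] 0) (𝓝 L) ∧
        Tendsto (fun δ : ℝ => (f 0 - f (-δ)) / (-util (-δ))) (𝓝[>] 0) (𝓝 L)) ∧
      μ * f a = F a ∧ μ * f b = F b := by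
  obtain ⟨G, hG, hGF⟩ : ∃ G : ℝ → ℝ, Continuous G ∧ EqOn G F (Icc a b) :=
    ⟨IccExtend (ha.trans hb).le ((Icc a b).domRestrict F),
      continuous_IccExtend_iff.2 hF.domRestrict, fun q hq => IccExtend_of_mem _ _ hq⟩
  have hsub : Icc a b ⊆ Ioo (a - 1) (b + 1) := fun q hq =>
    ⟨by linarith [hq.1], by linarith [hq.2]⟩
  obtain ⟨f, g, hfg, hfa, hfb⟩ := exists_isResolventPairOn_boundary_values hp hr hG
    (hp.nonneg_of_pos_of_ne hp_pos) (hr.nonneg_of_pos_of_ne hr_pos) hμ.le hsub ha.le hb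
    (fun t ht => hp_pos t ht.1.ne') (F a / μ) (F b / μ)
  set U := Ioo (a - 1) (b + 1) ∩ {0}ᶜ
  have hU : IsOpen U := isOpen_Ioo.inter isOpen_compl_singleton
  have hS : Icc a b \ {0} ⊆ U := fun q hq => ⟨hsub hq.1, hq.2⟩
  have hfgU : IsResolventPairOn p r μ G U f g := hfg.mono inter_subset_left
  have hquot q (hq : q ∈ U) := hfgU.deriv_div_eventuallyEq hU (fun x hx => hutil x hx.2)
    (fun x hx => (hp_pos x hx.2).ne') hq
  have hlim : Tendsto (fun x => (f x - f 0) / util x) (𝓝[≠] 0) (𝓝 (g 0)) := by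
    have h0 : Ioo (a - 1) (b + 1) ∈ 𝓝[≠] (0 : ℝ) :=
      mem_nhdsWithin_of_mem_nhds (Ioo_mem_nhds (by linarith) (by linarith))
    refine tendsto_sub_div_nhdsNE_of_hasDerivAt (p := p) ?_ ?_ ?_ ?_ ?_ hutil0
    · filter_upwards [h0] with x hx using (hfg x hx).1
    · filter_upwards [self_mem_nhdsWithin] with x hx using hutil x hx
    · filter_upwards [self_mem_nhdsWithin] with x hx using (hp_pos x hx).ne'
    · exact (hfg 0 (hsub ⟨ha.le, hb.le⟩)).1.continuousAt
    · exact (hfg 0 (hsub ⟨ha.le, hb.le⟩)).2.continuousAt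
  obtain ⟨hf1, hf2, hf3, hf4⟩ := (hfgU.contDiffOn hU (hp1.mono inter_subset_right)
    hr.continuousOn hG.continuousOn).second_deriv_regularity hU hS
  refine ⟨f, fun q hq => (hfg q (hsub hq)).1.continuousAt.continuousWithinAt, hf1, hf2, hf3, hf4,
    fun q hq => (hquot q (hS hq)).differentiableAt_iff.2 (hfg q (hsub hq.1)).2.differentiableAt,
    fun q hq => ?_, ⟨g 0, tendsto_one_sided_of_tendsto_nhdsNE hlim⟩,
    by rw [hfa]; field_simp, by rw [hfb]; field_simp⟩
  rw [(hquot q (hS hq)).deriv_eq, (hfg q (hsub hq.1)).2.deriv, (hvtil q hq.2).deriv,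
    mul_div_cancel_left₀ _ (hr_pos q hq.2).ne', hGF hq.1]
  ring

/-- The coordinate change `ỹ ↦ q` of the paper, which reinserts the interval `[-1, 1]` at `0`. -/
noncomputable def unglue (y : ℝ) : ℝ := if y ≤ 0 then y - 1 else y + 1

lemma unglue_eventuallyEq {y : ℝ} (hy : y ≠ 0) : ∃ c, unglue =ᶠ[𝓝 y] fun z => z + c := by
  rcases hy.lt_or_gt with hy | hy
  · refine ⟨-1, ?_⟩
    filter_upwards [Iio_mem_nhds hy] with z hz
    simp [unglue, (show z < 0 from hz).le, sub_eq_add_neg]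
  · refine ⟨1, ?_⟩
    filter_upwards [Ioi_mem_nhds hy] with z hz
    simp [unglue, not_le.2 (show (0 : ℝ) < z from hz)]

lemma hasDerivAt_unglue {y : ℝ} (hy : y ≠ 0) : HasDerivAt unglue 1 y := by
  obtain ⟨c, hc⟩ := unglue_eventuallyEq hy
  exact ((hasDerivAt_id y).add_const c).congr_of_eventuallyEq hc

lemma contDiffOn_unglue {n : WithTop ℕ∞} : ContDiffOn ℝ n unglue {0}ᶜ := fun y hy => by
  obtain ⟨c, hc⟩ := unglue_eventuallyEq hy
  exact ((contDiff_id.add contDiff_const).contDiffAt.congr_of_eventuallyEq hc).contDiffWithinAt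

lemma continuous_comp_unglue {P : ℝ → ℝ} (hP : Continuous P) (h : P (-1) = P 1) :
    Continuous (P ∘ unglue) := by
  rw [show P ∘ unglue = fun y => if y ≤ 0 then P (y - 1) else P (y + 1) from
    funext fun y => apply_ite P _ _ _]
  exact Continuous.if_le (by fun_prop) (by fun_prop) continuous_id continuous_const
    fun y hy => by simp [show y = 0 from hy, h]

lemma unglue_notMem_Icc {y : ℝ} (hy : y ≠ 0) : unglue y ∉ Icc (-1 : ℝ) 1 := by
  rcases hy.lt_or_gt with hy | hy
  · simp only [unglue, if_pos hy.le, mem_Icc, not_and_or, not_le]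
    left; linarith
  · simp only [unglue, if_neg (not_le.2 hy), mem_Icc, not_and_or, not_le]
    right; linarith

lemma eq_comp_unglue {w u : ℝ → ℝ} (hneg : ∀ y < 0, w y = u (y - 1))
    (hpos : ∀ y, 0 < y → w y = u (y + 1)) {y : ℝ} (hy : y ≠ 0) : w y = u (unglue y) := by
  rcases hy.lt_or_gt with hy | hy
  · simp [unglue, hy.le, hneg y hy]
  · simp [unglue, not_le.2 hy, hpos y hy]

lemma HasDerivAt.of_eq_comp_unglue {w u : ℝ → ℝ} {d y : ℝ} (hu : HasDerivAt u d (unglue y))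
    (hw : ∀ z ≠ 0, w z = u (unglue z)) (hy : y ≠ 0) : HasDerivAt w d y := by
  refine (hu.comp y (hasDerivAt_unglue hy)).congr_deriv (mul_one d) |>.congr_of_eventuallyEq ?_
  filter_upwards [isOpen_compl_singleton.mem_nhds hy] with z hz using hw z hz

lemma tendsto_nhdsNE_of_eq_comp_unglue {w u : ℝ → ℝ} (hu : Continuous u) (h : u (-1) = u 1)
    (hw : ∀ z ≠ 0, w z = u (unglue z)) : Tendsto w (𝓝[≠] 0) (𝓝 (u (-1))) := by
  have := (continuous_comp_unglue hu h).continuousAt (x := 0) |>.tendsto.mono_left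
    (nhdsWithin_le_nhds (s := {0}ᶜ))
  refine (this.congr' ?_).trans (by simp [unglue])
  filter_upwards [self_mem_nhdsWithin] with z hz using (hw z hz).symm

noncomputable def weightedDensity (lam bet : ℝ → ℝ) (κ x : ℝ) : ℝ :=
  lam x * Real.exp (κ * ∫ y in (0 : ℝ)..x, bet y * lam y)

section WeightedDensity

variable {lam bet : ℝ → ℝ}

lemma contDiff_weightedDensity (hlam : ContDiff ℝ 1 lam) (hbet : Continuous bet) (κ : ℝ) :
    ContDiff ℝ 1 (weightedDensity lam bet κ) := by
  have hc : Continuous fun y => bet y * lam y := hbet.mul hlam.continuous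
  have hI : ContDiff ℝ 1 fun x => ∫ y in (0 : ℝ)..x, bet y * lam y := by
    rw [contDiff_one_iff_deriv, funext (hc.deriv_integral _ 0)]
    exact ⟨fun x => (hc.integral_hasStrictDerivAt 0 x).hasDerivAt.differentiableAt, hc⟩
  exact hlam.mul (Real.contDiff_exp.comp (contDiff_const.mul hI))

lemma integral_weightedDensity_eq_zero (hlam : ∀ q ∈ Icc (-1 : ℝ) 1, lam q = 0) (κ : ℝ)
    {q : ℝ} (hq : q ∈ Icc (-1 : ℝ) 1) : ∫ x in (0 : ℝ)..q, weightedDensity lam bet κ x = 0 := by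
  have h0 : (0 : ℝ) ∈ Icc (-1 : ℝ) 1 := ⟨by norm_num, by norm_num⟩
  calc _ = ∫ _ in (0 : ℝ)..q, (0 : ℝ) := intervalIntegral.integral_congr fun x hx => by
        simp [weightedDensity, hlam x (uIcc_subset_Icc h0 hq hx)]
    _ = 0 := intervalIntegral.integral_zero

end WeightedDensity

theorem resolvent_equation_solvable_general
    (lam bet : ℝ → ℝ)
    (hlam_smooth : ContDiff ℝ 1 lam)
    (hlam_zero : ∀ q ∈ Set.Icc (-1 : ℝ) 1, lam q = 0)
    (hlam_pos : ∀ q : ℝ, q ∉ Set.Icc (-1 : ℝ) 1 → 0 < lam q)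
    (hbet_smooth : ContDiff ℝ 1 bet)
    (u v : ℝ → ℝ)
    (hu : ∀ q : ℝ, u q =
      ∫ x in (0:ℝ)..q, lam x * Real.exp (-2 * ∫ y in (0:ℝ)..x, bet y * lam y))
    (hv : ∀ q : ℝ, v q =
      2 * ∫ x in (0:ℝ)..q, lam x * Real.exp (2 * ∫ y in (0:ℝ)..x, bet y * lam y))
    (a b0 : ℝ) (ha : a < 0) (hb : 0 < b0)
    (util vtil : ℝ → ℝ)
    (hutil_neg : ∀ y : ℝ, y < 0 → util y = u (y - 1))
    (hutil_pos : ∀ y : ℝ, 0 < y → util y = u (y + 1))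
    (hvtil_neg : ∀ y : ℝ, y < 0 → vtil y = v (y - 1))
    (hvtil_pos : ∀ y : ℝ, 0 < y → vtil y = v (y + 1))
    (μ : ℝ) (hμ : 0 < μ)
    (F : ℝ → ℝ) (hF : ContinuousOn F (Set.Icc a b0)) :
    ∃ f : ℝ → ℝ,
      ContinuousOn f (Set.Icc a b0) ∧
      (∀ q ∈ Set.Icc a b0 \ {0}, DifferentiableAt ℝ f q) ∧
      ContinuousOn (deriv f) (Set.Icc a b0 \ {0}) ∧
      (∀ q ∈ Set.Icc a b0 \ {0}, DifferentiableAt ℝ (deriv f) q) ∧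
      ContinuousOn (deriv (deriv f)) (Set.Icc a b0 \ {0}) ∧
      (∀ q ∈ Set.Icc a b0 \ {0},
        DifferentiableAt ℝ (fun x => deriv f x / deriv util x) q) ∧
      (∀ q ∈ Set.Icc a b0 \ {0},
        μ * f q - deriv (fun x => deriv f x / deriv util x) q / deriv vtil q = F q) ∧
      (∃ L : ℝ,
        Tendsto (fun δ : ℝ => (f δ - f 0) / util δ) (𝓝[>] (0:ℝ)) (𝓝 L) ∧
        Tendsto (fun δ : ℝ => (f 0 - f (-δ)) / (-util (-δ))) (𝓝[>] (0:ℝ)) (𝓝 L)) ∧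
      μ * f a = F a ∧ μ * f b0 = F b0 := by
  have hW κ := contDiff_weightedDensity (bet := bet) hlam_smooth hbet_smooth.continuous κ
  have hW_pos κ y (hy : y ≠ 0) : 0 < weightedDensity lam bet κ (unglue y) :=
    mul_pos (hlam_pos _ (unglue_notMem_Icc hy)) (Real.exp_pos _)
  have hW_one κ : weightedDensity lam bet κ (-1) = weightedDensity lam bet κ 1 := by
    simp [weightedDensity, hlam_zero (-1) (by norm_num), hlam_zero 1 (by norm_num)]
  have hu' x : HasDerivAt u (weightedDensity lam bet (-2) x) x :=
    funext hu ▸ ((hW _).continuous.integral_hasStrictDerivAt 0 x).hasDerivAt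
  have hv' x : HasDerivAt v (2 * weightedDensity lam bet 2 x) x :=
    funext hv ▸ (((hW 2).continuous.integral_hasStrictDerivAt 0 x).hasDerivAt.const_mul 2)
  have hu_one : u (-1) = 0 ∧ u 1 = 0 := by
    simp only [hu]
    exact ⟨integral_weightedDensity_eq_zero hlam_zero _ (by norm_num),
      integral_weightedDensity_eq_zero hlam_zero _ (by norm_num)⟩
  have hutil y (hy : y ≠ 0) := eq_comp_unglue hutil_neg hutil_pos hy
  have hvtil y (hy : y ≠ 0) := eq_comp_unglue hvtil_neg hvtil_pos hy
  refine exists_resolvent_solution (p := weightedDensity lam bet (-2) ∘ unglue)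
    (r := fun y => 2 * weightedDensity lam bet 2 (unglue y))
    (continuous_comp_unglue (hW _).continuous (hW_one _))
    (continuous_const.mul (continuous_comp_unglue (hW 2).continuous (hW_one 2)))
    (hW_pos _) (fun y hy => mul_pos two_pos (hW_pos 2 y hy))
    ((hW _).comp_contDiffOn contDiffOn_unglue) (fun y hy => (hu' _).of_eq_comp_unglue hutil hy)
    (fun y hy => (hv' _).of_eq_comp_unglue hvtil hy) ?_ ha hb hμ hF
  have hucont : Continuous u := continuous_iff_continuousAt.2 fun x => (hu' x).continuousAt
  simpa [hu_one.1] using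
    tendsto_nhdsNE_of_eq_comp_unglue hucont (hu_one.1.trans hu_one.2.symm) hutil

/-- solvability of the resolvent equation μf − D_ṽD_ũf = F on [a, b₀] with
the gluing condition at 0 and the boundary conditions D_ṽD_ũf = 0 (i.e. μf = F) at the
endpoints. -/
theorem resolvent_equation_solvable
    (lam bet : ℝ → ℝ)
    (hlam_smooth : ContDiff ℝ 1 lam)
    (hlam_bdd : ∃ M : ℝ, ∀ q : ℝ, |lam q| ≤ M)
    (hlam_zero : ∀ q ∈ Set.Icc (-1 : ℝ) 1, lam q = 0)
    (hlam_pos : ∀ q : ℝ, q ∉ Set.Icc (-1 : ℝ) 1 → 0 < lam q)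
    (hbet_smooth : ContDiff ℝ 1 bet)
    (hbet_bdd : ∃ M : ℝ, ∀ q : ℝ, |bet q| ≤ M)
    (u v : ℝ → ℝ)
    (hu : ∀ q : ℝ, u q =
      ∫ x in (0:ℝ)..q, lam x * Real.exp (-2 * ∫ y in (0:ℝ)..x, bet y * lam y))
    (hv : ∀ q : ℝ, v q =
      2 * ∫ x in (0:ℝ)..q, lam x * Real.exp (2 * ∫ y in (0:ℝ)..x, bet y * lam y))
    (a b0 : ℝ) (ha : a < 0) (hb : 0 < b0)
    (util vtil : ℝ → ℝ)
    (hutil_neg : ∀ y : ℝ, y < 0 → util y = u (y - 1))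
    (hutil_pos : ∀ y : ℝ, 0 < y → util y = u (y + 1))
    (hutil_zero : util 0 = 0)
    (hvtil_neg : ∀ y : ℝ, y < 0 → vtil y = v (y - 1))
    (hvtil_pos : ∀ y : ℝ, 0 < y → vtil y = v (y + 1))
    (hvtil_zero : vtil 0 = 0)
    (μ : ℝ) (hμ : 0 < μ)
    (F : ℝ → ℝ) (hF : ContinuousOn F (Set.Icc a b0)) :
    ∃ f : ℝ → ℝ,
      ContinuousOn f (Set.Icc a b0) ∧
      (∀ q ∈ Set.Icc a b0 \ {0}, DifferentiableAt ℝ f q) ∧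
      ContinuousOn (deriv f) (Set.Icc a b0 \ {0}) ∧
      (∀ q ∈ Set.Icc a b0 \ {0}, DifferentiableAt ℝ (deriv f) q) ∧
      ContinuousOn (deriv (deriv f)) (Set.Icc a b0 \ {0}) ∧
      (∀ q ∈ Set.Icc a b0 \ {0},
        DifferentiableAt ℝ (fun x => deriv f x / deriv util x) q) ∧
      (∀ q ∈ Set.Icc a b0 \ {0},
        μ * f q - deriv (fun x => deriv f x / deriv util x) q / deriv vtil q = F q) ∧
      (∃ L : ℝ,
        Tendsto (fun δ : ℝ => (f δ - f 0) / util δ) (𝓝[>] (0:ℝ)) (𝓝 L) ∧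
        Tendsto (fun δ : ℝ => (f 0 - f (-δ)) / (-util (-δ))) (𝓝[>] (0:ℝ)) (𝓝 L)) ∧
      μ * f a = F a ∧ μ * f b0 = F b0 :=
  resolvent_equation_solvable_general lam bet hlam_smooth hlam_zero hlam_pos hbet_smooth u v hu hv a
    b0 ha hb util vtil hutil_neg hutil_pos hvtil_neg hvtil_pos μ hμ F hF
end
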